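/- arXiv:2210.05247 — 6 statements merged into one kernel-verified Lean document; each statement's English description precedes it below -/
import Mathlib

section
/- (Theorem 1, training bound) The classification error satisfies ℓ ≤ 2·exp( -2·(π_inv + (2p - 1)·Σ_{i=1}^D α_i·π_{sp,i})² / (4·Σ_{i=1}^D α_i² + 1) ), where α_i = w_{sp,i}/w_inv. -/
/-!
Chernoff bound. For `Y = ±1` and `t ≥ 0` one has `1 - Y sgn O ≤ 2 exp (-t Y O / w_inv)`, and
`Y O / w_inv = m_inv + ∑ α_i m_{sp,i} (Y Z_{sp,i})` is a sum of independent terms with values in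
`[0, 1]` and `[-α_i, α_i]` and means `π_inv` and `(2p - 1) α_i π_{sp,i}`. Hoeffding's lemma bounds
its moment generating function at `-t` by `exp (-t M + C t² / 8)`, where
`M = π_inv + (2p - 1) ∑ α_i π_{sp,i}` and `C = 4 ∑ α_i² + 1`; at `t = 4M / C` this is
`exp (-2 M² / C)`. The law is given atom by atom, so expectations are finite sums over
configurations of label and masks, and independence is the factorisation of such sums.
-/

open MeasureTheory ProbabilityTheory Real Function

theorem ProbabilityTheory.mgf_le_exp_of_mem_Icc {Ω : Type*} [MeasurableSpace Ω] {μ : Measure Ω}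
    [IsProbabilityMeasure μ] {X : Ω → ℝ} {a b : ℝ} (hX : AEMeasurable X μ)
    (hab : ∀ᵐ ω ∂μ, X ω ∈ Set.Icc a b) (t : ℝ) :
    mgf X μ t ≤ exp (t * μ[X] + (b - a) ^ 2 * t ^ 2 / 8) := by
  have h := (hasSubgaussianMGF_of_mem_Icc hX hab).mgf_le t
  have hcentered : mgf X μ t = mgf (fun ω ↦ X ω - μ[X]) μ t * exp (t * μ[X]) := by
    simp_rw [sub_eq_add_neg, mgf_add_const, mul_assoc, ← exp_add]
    simp
  rw [hcentered, add_comm, exp_add]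
  gcongr
  refine h.trans_eq (congrArg exp ?_)
  push_cast
  rw [norm_eq_abs, div_pow, sq_abs]
  ring

theorem sum_mul_exp_le_of_mem_Icc {ι : Type*} [Fintype ι] {w x : ι → ℝ} {a b : ℝ}
    (hw : ∀ j, 0 ≤ w j) (hw1 : ∑ j, w j = 1) (hx : ∀ j, x j ∈ Set.Icc a b) (t : ℝ) :
    ∑ j, w j * exp (t * x j) ≤ exp (t * ∑ j, w j * x j + (b - a) ^ 2 * t ^ 2 / 8) := by
  let _ : MeasurableSpace ι := ⊤
  let P : PMF ι := PMF.ofFintype (fun j ↦ ENNReal.ofReal (w j)) (by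
    rw [← ENNReal.ofReal_sum_of_nonneg fun j _ ↦ hw j, hw1, ENNReal.ofReal_one])
  have hP : ∀ f : ι → ℝ, ∫ j, f j ∂P.toMeasure = ∑ j, w j * f j := fun f ↦ by
    simp [PMF.integral_eq_sum, P, ENNReal.toReal_ofReal (hw _)]
  have := mgf_le_exp_of_mem_Icc (μ := P.toMeasure) (measurable_of_countable x).aemeasurable
    (ae_of_all _ hx) t
  simpa only [mgf, hP] using this

theorem MeasureTheory.integral_comp_eq_sum_of_sum_measure_preimage_eq_one {Ω E ι : Type*}
    [MeasurableSpace Ω] [MeasurableSpace E] [MeasurableSingletonClass E] [Fintype ι]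
    {μ : Measure Ω} [IsProbabilityMeasure μ] {X : Ω → E} (hX : Measurable X) {x : ι → E}
    (hx : Function.Injective x) (hμ : ∑ k, μ (X ⁻¹' {x k}) = 1) (g : E → ℝ) :
    ∫ ω, g (X ω) ∂μ = ∑ k, μ.real (X ⁻¹' {x k}) * g (x k) := by
  have hmeas : ∀ k, MeasurableSet (X ⁻¹' {x k}) := fun k ↦ hX (measurableSet_singleton _)
  have hdisj : Pairwise (Disjoint on fun k ↦ X ⁻¹' {x k}) := fun i j hij ↦
    (Set.disjoint_singleton.2 (hx.ne hij)).preimage X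
  have hfull : μ.restrict (⋃ k, X ⁻¹' {x k}) = μ := by
    refine Measure.restrict_eq_self_of_ae_mem ((mem_ae_iff_prob_eq_one (.iUnion hmeas)).2 ?_)
    rwa [measure_iUnion hdisj hmeas, tsum_fintype]
  have hconst : ∀ k, Set.EqOn (fun ω ↦ g (X ω)) (fun _ ↦ g (x k)) (X ⁻¹' {x k}) :=
    fun k ω hω ↦ congrArg g hω
  conv_lhs => rw [← hfull]
  rw [integral_iUnion_fintype hmeas hdisj
    fun k ↦ (integrableOn_const (measure_ne_top _ _)).congr_fun (hconst k).symm (hmeas k)]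
  refine Finset.sum_congr rfl fun k _ ↦ ?_
  rw [setIntegral_congr_fun (hmeas k) (hconst k), setIntegral_const, smul_eq_mul]

theorem Real.one_sub_mul_sign_le_two_mul_exp {y o t : ℝ} (hy : y = 1 ∨ y = -1) (ht : 0 ≤ t) :
    1 - y * Real.sign o ≤ 2 * exp (-(t * (y * o))) := by
  by_cases hpos : 0 < y * o
  · have hsign : y * Real.sign o = 1 := by
      rcases hy with rfl | rfl
      · simp [Real.sign_of_pos (by linarith : 0 < o)]
      · simp [Real.sign_of_neg (by linarith : o < 0)]
    rw [hsign, sub_self]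
    positivity
  · have hsign : -1 ≤ y * Real.sign o := by
      rcases hy with rfl | rfl <;> rcases Real.sign_apply_eq o with h | h | h <;> norm_num [h]
    have hexp : 1 ≤ exp (-(t * (y * o))) := one_le_exp (by nlinarith)
    linarith

namespace SpuriousFeatures

variable {D : ℕ}

def spin (b : Bool) : ℝ := if b then 1 else -1

def bit (b : Bool) : ℝ := if b then 1 else 0

def bernoulliMass (q : ℝ) (b : Bool) : ℝ := if b then q else 1 - q

lemma bernoulliMass_nonneg {q : ℝ} (hq0 : 0 ≤ q) (hq1 : q ≤ 1) (b : Bool) :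
    0 ≤ bernoulliMass q b := by
  cases b <;> simp [bernoulliMass] <;> linarith

lemma sum_bernoulliMass (q : ℝ) : ∑ b, bernoulliMass q b = 1 := by
  simp [bernoulliMass]

lemma spin_injective : Injective spin := by
  intro a b h; cases a <;> cases b <;> first | rfl | norm_num [spin] at h

lemma bit_injective : Injective bit := by
  intro a b h; cases a <;> cases b <;> first | rfl | norm_num [bit] at h

/-- A configuration `(y, a, g)` records the label `y`, the invariant mask `a` and, for each spurious
feature, whether it agrees with the label and its mask. Recording agreement rather than `Z_{sp,i}`
makes `weight` and `margin` independent of `y`. -/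
abbrev Config (D : ℕ) := Bool × Bool × (Fin D → Bool × Bool)

abbrev Sample (D : ℕ) := ℝ × (Fin D → ℝ) × ℝ × (Fin D → ℝ)

def Config.toSample (k : Config D) : Sample D :=
  (spin k.1, fun i ↦ spin ((k.2.2 i).1 == k.1), bit k.2.1, fun i ↦ bit (k.2.2 i).2)

lemma Config.toSample_injective : Injective (Config.toSample (D := D)) := by
  rintro ⟨y, a, g⟩ ⟨y', a', g'⟩ h
  simp only [Config.toSample, Prod.mk.injEq, funext_iff] at h
  obtain ⟨hy, hZ, ha, hm⟩ := h
  obtain rfl := spin_injective hy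
  obtain rfl := bit_injective ha
  refine Prod.ext rfl (Prod.ext rfl (funext fun i ↦ Prod.ext ?_ (bit_injective (hm i))))
  have := spin_injective (hZ i)
  cases y <;> simpa using this

noncomputable def weight (p πInv : ℝ) (πSp : Fin D → ℝ) (k : Config D) : ℝ :=
  1 / 2 * bernoulliMass πInv k.2.1 *
    ∏ i, bernoulliMass p (k.2.2 i).1 * bernoulliMass (πSp i) (k.2.2 i).2

lemma sum_weight_mul_prod (p πInv : ℝ) (πSp : Fin D → ℝ) (F : Bool → ℝ)
    (G : Fin D → Bool × Bool → ℝ) :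
    ∑ k : Config D, weight p πInv πSp k * (F k.2.1 * ∏ i, G i (k.2.2 i)) =
      (∑ a, bernoulliMass πInv a * F a) *
        ∏ i, ∑ j, bernoulliMass p j.1 * bernoulliMass (πSp i) j.2 * G i j := by
  set H : Fin D → Bool × Bool → ℝ :=
    fun i j ↦ bernoulliMass p j.1 * bernoulliMass (πSp i) j.2 * G i j
  calc _ = ∑ _y : Bool, ∑ a, ∑ g : Fin D → Bool × Bool,
        1 / 2 * (bernoulliMass πInv a * F a * ∏ i, H i (g i)) := by
        simp only [Fintype.sum_prod_type, weight, H, Finset.prod_mul_distrib]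
        refine Fintype.sum_congr _ _ fun _ ↦ Fintype.sum_congr _ _ fun _ ↦
          Fintype.sum_congr _ _ fun _ ↦ by ring
    _ = _ := by
        simp only [← Finset.mul_sum, ← Finset.sum_mul, ← Fintype.prod_sum]
        simp only [Fintype.sum_bool, Finset.sum_const, Finset.card_univ, Fintype.card_bool]
        ring

lemma weight_nonneg {p πInv : ℝ} {πSp : Fin D → ℝ} (hp0 : 0 ≤ p) (hp1 : p ≤ 1)
    (hπInv0 : 0 ≤ πInv) (hπInv1 : πInv ≤ 1) (hπSp0 : ∀ i, 0 ≤ πSp i) (hπSp1 : ∀ i, πSp i ≤ 1)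
    (k : Config D) : 0 ≤ weight p πInv πSp k :=
  mul_nonneg (mul_nonneg (by norm_num) (bernoulliMass_nonneg hπInv0 hπInv1 _))
    (Finset.prod_nonneg fun i _ ↦ mul_nonneg (bernoulliMass_nonneg hp0 hp1 _)
      (bernoulliMass_nonneg (hπSp0 i) (hπSp1 i) _))

lemma sum_weight (p πInv : ℝ) (πSp : Fin D → ℝ) : ∑ k, weight p πInv πSp k = 1 := by
  simpa only [mul_one, Finset.prod_const_one, Fintype.sum_prod_type, ← Finset.mul_sum,
    sum_bernoulliMass] using sum_weight_mul_prod p πInv πSp (fun _ ↦ 1) (fun _ _ ↦ 1)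

def HasMaskedLaw {Ω : Type*} [MeasurableSpace Ω] (μ : Measure Ω) (p πInv : ℝ)
    (πSp : Fin D → ℝ) (Y : Ω → ℝ) (Z : Fin D → Ω → ℝ) (mInv : Ω → ℝ) (mSp : Fin D → Ω → ℝ) :
    Prop :=
  ∀ (y : Bool) (ε : Fin D → Bool) (a : Bool) (c : Fin D → Bool),
      μ {ω | Y ω = (if y then (1 : ℝ) else -1) ∧
             (∀ i, Z i ω = (if ε i then (1 : ℝ) else -1)) ∧
             mInv ω = (if a then (1 : ℝ) else 0) ∧
             (∀ i, mSp i ω = (if c i then (1 : ℝ) else 0))} =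
        ENNReal.ofReal ((1 / 2) *
          (∏ i, (if ε i = y then p else 1 - p)) *
          (if a then πInv else 1 - πInv) *
          (∏ i, (if c i then πSp i else 1 - πSp i)))

def sample {Ω : Type*} (Y : Ω → ℝ) (Z : Fin D → Ω → ℝ) (mInv : Ω → ℝ) (mSp : Fin D → Ω → ℝ)
    (ω : Ω) : Sample D :=
  (Y ω, fun i ↦ Z i ω, mInv ω, fun i ↦ mSp i ω)

lemma measurable_sample {Ω : Type*} [MeasurableSpace Ω] {Y : Ω → ℝ} {Z : Fin D → Ω → ℝ}
    {mInv : Ω → ℝ} {mSp : Fin D → Ω → ℝ} (hY : Measurable Y) (hZ : ∀ i, Measurable (Z i))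
    (hmInv : Measurable mInv) (hmSp : ∀ i, Measurable (mSp i)) :
    Measurable (sample Y Z mInv mSp) :=
  hY.prodMk ((measurable_pi_lambda _ hZ).prodMk (hmInv.prodMk (measurable_pi_lambda _ hmSp)))

section Law

variable {Ω : Type*} [MeasurableSpace Ω] {μ : Measure Ω} {p πInv : ℝ} {πSp : Fin D → ℝ}
  {Y : Ω → ℝ} {Z : Fin D → Ω → ℝ} {mInv : Ω → ℝ} {mSp : Fin D → Ω → ℝ}

lemma HasMaskedLaw.measure_preimage_toSample (h : HasMaskedLaw μ p πInv πSp Y Z mInv mSp)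
    (k : Config D) :
    μ (sample Y Z mInv mSp ⁻¹' {k.toSample}) = ENNReal.ofReal (weight p πInv πSp k) := by
  obtain ⟨y, a, g⟩ := k
  convert h y (fun i ↦ (g i).1 == y) a (fun i ↦ (g i).2) using 2
  · ext ω
    simp [sample, Config.toSample, Prod.ext_iff, funext_iff, spin, bit]
  · have hagree : ∀ e : Bool, (if (e == y) = y then p else 1 - p) = bernoulliMass p e := by
      intro e; cases e <;> cases y <;> rfl
    simp only [weight, hagree, Finset.prod_mul_distrib, bernoulliMass]
    ring

lemma HasMaskedLaw.integral_comp_sample [IsProbabilityMeasure μ]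
    (h : HasMaskedLaw μ p πInv πSp Y Z mInv mSp) (hY : Measurable Y)
    (hZ : ∀ i, Measurable (Z i)) (hmInv : Measurable mInv) (hmSp : ∀ i, Measurable (mSp i))
    (hp0 : 0 ≤ p) (hp1 : p ≤ 1) (hπInv0 : 0 ≤ πInv) (hπInv1 : πInv ≤ 1)
    (hπSp0 : ∀ i, 0 ≤ πSp i) (hπSp1 : ∀ i, πSp i ≤ 1) (g : Sample D → ℝ) :
    ∫ ω, g (sample Y Z mInv mSp ω) ∂μ = ∑ k, weight p πInv πSp k * g k.toSample := by
  have hweight := weight_nonneg hp0 hp1 hπInv0 hπInv1 hπSp0 hπSp1 (πSp := πSp)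
  have hsum : ∑ k : Config D, μ (sample Y Z mInv mSp ⁻¹' {k.toSample}) = 1 := by
    simp_rw [h.measure_preimage_toSample, ← ENNReal.ofReal_sum_of_nonneg fun k _ ↦ hweight k,
      sum_weight, ENNReal.ofReal_one]
  rw [integral_comp_eq_sum_of_sum_measure_preimage_eq_one (measurable_sample hY hZ hmInv hmSp)
    Config.toSample_injective hsum]
  simp only [measureReal_def, h.measure_preimage_toSample, ENNReal.toReal_ofReal (hweight _)]

end Law

def margin (α : Fin D → ℝ) (k : Config D) : ℝ :=
  bit k.2.1 + ∑ i, α i * (bit (k.2.2 i).2 * spin (k.2.2 i).1)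

def output (wInv : ℝ) (wSp : Fin D → ℝ) (s : Sample D) : ℝ :=
  wInv * s.2.2.1 * s.1 + ∑ i, wSp i * s.2.2.2 i * s.2.1 i

noncomputable def loss (wInv : ℝ) (wSp : Fin D → ℝ) (s : Sample D) : ℝ :=
  1 - s.1 * Real.sign (output wInv wSp s)

lemma spin_mul_output_toSample {wInv : ℝ} (hwInv : wInv ≠ 0) (wSp : Fin D → ℝ)
    (k : Config D) :
    spin k.1 * output wInv wSp k.toSample = wInv * margin (fun i ↦ wSp i / wInv) k := by
  obtain ⟨y, a, g⟩ := k
  simp only [output, Config.toSample, margin, mul_add, Finset.mul_sum]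
  congr 1
  · cases y <;> simp [spin]
  · refine Finset.sum_congr rfl fun i _ ↦ ?_
    field_simp
    cases y <;> cases (g i).1 <;> simp [spin]

lemma loss_toSample_le {wInv t : ℝ} (hwInv : 0 < wInv)
    (wSp : Fin D → ℝ) (ht : 0 ≤ t) (k : Config D) :
    loss wInv wSp k.toSample ≤
      2 * exp (-t * margin (fun i ↦ wSp i / wInv) k) := by
  have hspin : spin k.1 = 1 ∨ spin k.1 = -1 := by cases k.1 <;> simp [spin]
  have := Real.one_sub_mul_sign_le_two_mul_exp hspin (div_nonneg ht hwInv.le)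
    (o := output wInv wSp k.toSample)
  rw [spin_mul_output_toSample hwInv.ne'] at this
  convert this using 3
  · rfl
  · field_simp

lemma sum_bernoulliMass_mul_exp_le {q : ℝ} (hq0 : 0 ≤ q) (hq1 : q ≤ 1) (s : ℝ) :
    ∑ a, bernoulliMass q a * exp (s * bit a) ≤ exp (s * q + s ^ 2 / 8) := by
  have := sum_mul_exp_le_of_mem_Icc (bernoulliMass_nonneg hq0 hq1) (sum_bernoulliMass q)
    (x := bit) (a := 0) (b := 1) (fun a ↦ by cases a <;> norm_num [bit]) s
  convert this using 3 <;> simp [bernoulliMass, bit]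

lemma sum_bernoulliMass_mul_bernoulliMass_mul_exp_le {p q α : ℝ} (hp0 : 0 ≤ p) (hp1 : p ≤ 1)
    (hq0 : 0 ≤ q) (hq1 : q ≤ 1) (hα : 0 ≤ α) (s : ℝ) :
    ∑ j : Bool × Bool, bernoulliMass p j.1 * bernoulliMass q j.2 *
        exp (s * (α * (bit j.2 * spin j.1))) ≤
      exp (s * ((2 * p - 1) * (α * q)) + 4 * α ^ 2 * s ^ 2 / 8) := by
  have := sum_mul_exp_le_of_mem_Icc
    (fun j ↦ mul_nonneg (bernoulliMass_nonneg hp0 hp1 j.1) (bernoulliMass_nonneg hq0 hq1 j.2))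
    (by simp only [Fintype.sum_prod_type, ← Finset.mul_sum, sum_bernoulliMass, mul_one])
    (x := fun j : Bool × Bool ↦ α * (bit j.2 * spin j.1)) (a := -α) (b := α)
    (fun j ↦ by rcases j with ⟨_ | _, _ | _⟩ <;> simp [bit, spin, hα]) s
  convert this using 4
  · simp [Fintype.sum_prod_type, bernoulliMass, bit, spin]
    ring
  · ring

lemma sum_weight_mul_exp_margin_le {p πInv : ℝ} {πSp α : Fin D → ℝ} (hp0 : 0 ≤ p)
    (hp1 : p ≤ 1) (hπInv0 : 0 ≤ πInv) (hπInv1 : πInv ≤ 1) (hπSp0 : ∀ i, 0 ≤ πSp i)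
    (hπSp1 : ∀ i, πSp i ≤ 1) (hα : ∀ i, 0 ≤ α i) (s : ℝ) :
    ∑ k, weight p πInv πSp k * exp (s * margin α k) ≤
      exp (s * (πInv + (2 * p - 1) * ∑ i, α i * πSp i) +
        (4 * ∑ i, α i ^ 2 + 1) * s ^ 2 / 8) := by
  have hsplit : ∀ k : Config D, exp (s * margin α k) = exp (s * bit k.2.1) *
      ∏ i, exp (s * (α i * (bit (k.2.2 i).2 * spin (k.2.2 i).1))) := fun k ↦ by
    rw [margin, mul_add, Finset.mul_sum, exp_add, exp_sum]
  have hfactor_nonneg : ∀ i, 0 ≤ ∑ j : Bool × Bool, bernoulliMass p j.1 *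
      bernoulliMass (πSp i) j.2 * exp (s * (α i * (bit j.2 * spin j.1))) := fun i ↦
    Finset.sum_nonneg fun j _ ↦ mul_nonneg (mul_nonneg (bernoulliMass_nonneg hp0 hp1 _)
      (bernoulliMass_nonneg (hπSp0 i) (hπSp1 i) _)) (exp_pos _).le
  calc _ = (∑ a, bernoulliMass πInv a * exp (s * bit a)) *
        ∏ i, ∑ j : Bool × Bool, bernoulliMass p j.1 * bernoulliMass (πSp i) j.2 *
          exp (s * (α i * (bit j.2 * spin j.1))) := by
        simp only [hsplit]
        exact sum_weight_mul_prod p πInv πSp (fun a ↦ exp (s * bit a))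
          fun i j ↦ exp (s * (α i * (bit j.2 * spin j.1)))
    _ ≤ exp (s * πInv + s ^ 2 / 8) *
        ∏ i, exp (s * ((2 * p - 1) * (α i * πSp i)) + 4 * α i ^ 2 * s ^ 2 / 8) :=
        mul_le_mul (sum_bernoulliMass_mul_exp_le hπInv0 hπInv1 s)
          (Finset.prod_le_prod (fun i _ ↦ hfactor_nonneg i) fun i _ ↦
            sum_bernoulliMass_mul_bernoulliMass_mul_exp_le hp0 hp1 (hπSp0 i) (hπSp1 i) (hα i) s)
          (Finset.prod_nonneg fun i _ ↦ hfactor_nonneg i) (exp_pos _).le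
    _ = _ := by
        rw [← exp_sum, ← exp_add]
        congr 1
        simp only [Finset.sum_add_distrib, ← Finset.mul_sum, ← Finset.sum_div, ← Finset.sum_mul]
        ring

lemma sum_weight_mul_loss_le {p πInv wInv t : ℝ} {πSp wSp : Fin D → ℝ} (hp0 : 0 ≤ p)
    (hp1 : p ≤ 1) (hπInv0 : 0 ≤ πInv) (hπInv1 : πInv ≤ 1) (hπSp0 : ∀ i, 0 ≤ πSp i)
    (hπSp1 : ∀ i, πSp i ≤ 1) (hwInv : 0 < wInv) (hwSp : ∀ i, 0 ≤ wSp i) (ht : 0 ≤ t) :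
    ∑ k, weight p πInv πSp k * loss wInv wSp k.toSample ≤
      2 * exp (-t * (πInv + (2 * p - 1) * ∑ i, wSp i / wInv * πSp i) +
        (4 * ∑ i, (wSp i / wInv) ^ 2 + 1) * t ^ 2 / 8) := by
  calc _ ≤ ∑ k, weight p πInv πSp k * (2 * exp (-t * margin (fun i ↦ wSp i / wInv) k)) :=
        Finset.sum_le_sum fun k _ ↦ mul_le_mul_of_nonneg_left (loss_toSample_le hwInv wSp ht k)
          (weight_nonneg hp0 hp1 hπInv0 hπInv1 hπSp0 hπSp1 k)
    _ = 2 * ∑ k, weight p πInv πSp k * exp (-t * margin (fun i ↦ wSp i / wInv) k) := by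
        rw [Finset.mul_sum]
        exact Finset.sum_congr rfl fun k _ ↦ by ring
    _ ≤ _ := by
        have := sum_weight_mul_exp_margin_le hp0 hp1 hπInv0 hπInv1 hπSp0 hπSp1
          (fun i ↦ div_nonneg (hwSp i) hwInv.le) (-t)
        rw [neg_sq] at this
        gcongr

end SpuriousFeatures

open SpuriousFeatures

theorem stmt_2_general
    {Ω : Type*} [MeasurableSpace Ω] (μ : MeasureTheory.Measure Ω)
    [MeasureTheory.IsProbabilityMeasure μ]
    (D : ℕ) (p : ℝ) (hp : 1 / 2 < p) (hp1 : p ≤ 1)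
    (πInv : ℝ) (πSp : Fin D → ℝ)
    (hπInv0 : 0 ≤ πInv) (hπInv1 : πInv ≤ 1)
    (hπSp0 : ∀ i, 0 ≤ πSp i) (hπSp1 : ∀ i, πSp i ≤ 1)
    (Y : Ω → ℝ) (Z : Fin D → Ω → ℝ) (mInv : Ω → ℝ) (mSp : Fin D → Ω → ℝ)
    (hY : Measurable Y) (hZ : ∀ i, Measurable (Z i))
    (hmInv : Measurable mInv) (hmSp : ∀ i, Measurable (mSp i))
    (hlaw : ∀ (y : Bool) (ε : Fin D → Bool) (a : Bool) (c : Fin D → Bool),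
      μ {ω | Y ω = (if y then (1 : ℝ) else -1) ∧
             (∀ i, Z i ω = (if ε i then (1 : ℝ) else -1)) ∧
             mInv ω = (if a then (1 : ℝ) else 0) ∧
             (∀ i, mSp i ω = (if c i then (1 : ℝ) else 0))} =
        ENNReal.ofReal ((1 / 2) *
          (∏ i, (if ε i = y then p else 1 - p)) *
          (if a then πInv else 1 - πInv) *
          (∏ i, (if c i then πSp i else 1 - πSp i))))
    (wInv : ℝ) (hwInv : 0 < wInv) (wSp : Fin D → ℝ) (hwSp : ∀ i, 0 < wSp i)
    (O : Ω → ℝ)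
    (hO : ∀ ω, O ω = wInv * mInv ω * Y ω + ∑ i, wSp i * mSp i ω * Z i ω)
    (ℓ : ℝ)
    (hℓ : ℓ = (1 / 2) * ∫ ω, (1 - Y ω * Real.sign (O ω)) ∂μ) :
    ℓ ≤ 2 * Real.exp (-2 * (πInv + (2 * p - 1) * ∑ i, (wSp i / wInv) * πSp i) ^ 2 /
          (4 * (∑ i, (wSp i / wInv) ^ 2) + 1)) := by
  set M := πInv + (2 * p - 1) * ∑ i, (wSp i / wInv) * πSp i
  set C := 4 * (∑ i, (wSp i / wInv) ^ 2) + 1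
  have hM : 0 ≤ M := add_nonneg hπInv0 (mul_nonneg (by linarith) (Finset.sum_nonneg fun i _ ↦
    mul_nonneg (div_pos (hwSp i) hwInv).le (hπSp0 i)))
  have hC : 0 < C := by positivity
  have hlaw' : HasMaskedLaw μ p πInv πSp Y Z mInv mSp := hlaw
  have hint : ∫ ω, (1 - Y ω * Real.sign (O ω)) ∂μ =
      ∑ k, weight p πInv πSp k * loss wInv wSp k.toSample := by
    rw [← hlaw'.integral_comp_sample hY hZ hmInv hmSp (by linarith) hp1 hπInv0 hπInv1 hπSp0 hπSp1]
    simp [sample, loss, output, hO]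
  -- `4 * M / C` minimises `-t * M + C * t ^ 2 / 8`.
  calc ℓ = 1 / 2 * ∑ k, weight p πInv πSp k * loss wInv wSp k.toSample := by rw [hℓ, hint]
    _ ≤ 1 / 2 * (2 * exp (-(4 * M / C) * M + C * (4 * M / C) ^ 2 / 8)) := by
        gcongr
        exact sum_weight_mul_loss_le (by linarith) hp1 hπInv0 hπInv1 hπSp0 hπSp1 hwInv
          (fun i ↦ (hwSp i).le) (by positivity)
    _ = exp (-2 * M ^ 2 / C) := by
        rw [← mul_assoc, one_div_mul_cancel two_ne_zero, one_mul]
        congr 1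
        field_simp
        ring
    _ ≤ 2 * exp (-2 * M ^ 2 / C) := by linarith [exp_pos (-2 * M ^ 2 / C)]

/-- **Theorem 1, training bound.** -/
theorem stmt_2
    {Ω : Type*} [MeasurableSpace Ω] (μ : MeasureTheory.Measure Ω)
    [MeasureTheory.IsProbabilityMeasure μ]
    (D : ℕ) (hD : 0 < D) (p : ℝ) (hp : 1 / 2 < p) (hp1 : p ≤ 1)
    (πInv : ℝ) (πSp : Fin D → ℝ)
    (hπInv0 : 0 ≤ πInv) (hπInv1 : πInv ≤ 1)
    (hπSp0 : ∀ i, 0 ≤ πSp i) (hπSp1 : ∀ i, πSp i ≤ 1)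
    (Y : Ω → ℝ) (Z : Fin D → Ω → ℝ) (mInv : Ω → ℝ) (mSp : Fin D → Ω → ℝ)
    (hY : Measurable Y) (hZ : ∀ i, Measurable (Z i))
    (hmInv : Measurable mInv) (hmSp : ∀ i, Measurable (mSp i))
    (hlaw : ∀ (y : Bool) (ε : Fin D → Bool) (a : Bool) (c : Fin D → Bool),
      μ {ω | Y ω = (if y then (1 : ℝ) else -1) ∧
             (∀ i, Z i ω = (if ε i then (1 : ℝ) else -1)) ∧
             mInv ω = (if a then (1 : ℝ) else 0) ∧
             (∀ i, mSp i ω = (if c i then (1 : ℝ) else 0))} =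
        ENNReal.ofReal ((1 / 2) *
          (∏ i, (if ε i = y then p else 1 - p)) *
          (if a then πInv else 1 - πInv) *
          (∏ i, (if c i then πSp i else 1 - πSp i))))
    (wInv : ℝ) (hwInv : 0 < wInv) (wSp : Fin D → ℝ) (hwSp : ∀ i, 0 < wSp i)
    (O : Ω → ℝ)
    (hO : ∀ ω, O ω = wInv * mInv ω * Y ω + ∑ i, wSp i * mSp i ω * Z i ω)
    (ℓ : ℝ)
    (hℓ : ℓ = (1 / 2) * ∫ ω, (1 - Y ω * Real.sign (O ω)) ∂μ)
    (hO0 : μ {ω | O ω = 0} = 0) :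
    ℓ ≤ 2 * Real.exp (-2 * (πInv + (2 * p - 1) * ∑ i, (wSp i / wInv) * πSp i) ^ 2 /
          (4 * (∑ i, (wSp i / wInv) ^ 2) + 1)) :=
  stmt_2_general μ D p hp hp1 πInv πSp hπInv0 hπInv1 hπSp0 hπSp1 Y Z mInv mSp hY hZ hmInv hmSp hlaw
    wInv hwInv wSp hwSp O hO ℓ hℓ
end

section
/- (Theorem 2, perfectly debiased training bound) If φ = 1 - 1/(2p), then the classification error under the mixture distribution satisfies ℓ ≤ 2·exp( -2·π_inv² / (4·Σ_{i=1}^D α_i² + 1) ), where α_i = w_{sp,i}/w_inv; i.e. the training bound coincides with the unbiased test bound. -/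
/-!
At `φ = 1 - 1 / (2p)` both branches of the mixture law have probability `1 / 2`, so the spurious
features are fair signs independent of `Y`. Multiplying the output by `Y` and flipping each `Z i` by
`Y`, the error becomes the expected 0-1 loss of `w_inv m_inv + ∑ i, w_i m_i ξ_i` with independent
Bernoulli masks `m_i` and Rademacher signs `ξ_i`. If `m_inv = 0` this expectation is exactly `1 / 2`
by the symmetry `ξ ↦ -ξ`; if `m_inv = 1`, Chernoff's bound with `cosh u ≤ exp (u² / 2)` gives
`exp (-1 / (2 ∑ α_i²))`. The elementary inequality `(1 - π) / 2 + π e^{-s} ≤ 2 e^{-π² s}` for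
`s = 2 / (4 ∑ α_i² + 1) ≤ 1 / (2 ∑ α_i²)` concludes.
-/

open Real Finset MeasureTheory

def boolSign (b : Bool) : ℝ := if b then 1 else -1

def boolBit (b : Bool) : ℝ := if b then 1 else 0

def bernoulliWeight (q : ℝ) (b : Bool) : ℝ := if b then q else 1 - q

-- `Real.sign 0 = 0`, so a tie costs `1 / 2`.
noncomputable def zeroOneLoss (x : ℝ) : ℝ := (1 - Real.sign x) / 2

lemma boolSign_injective : Function.Injective boolSign := by
  intro a b h; cases a <;> cases b <;> first | rfl | norm_num [boolSign] at h

lemma boolBit_injective : Function.Injective boolBit := by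
  intro a b h; cases a <;> cases b <;> first | rfl | norm_num [boolBit] at h

lemma boolSign_mul_boolSign (y b : Bool) : boolSign y * boolSign b = boolSign (b == y) := by
  cases y <;> cases b <;> norm_num [boolSign]

lemma boolSign_mul_self (b : Bool) : boolSign b * boolSign b = 1 := by
  cases b <;> norm_num [boolSign]

lemma boolSign_mul_sign (b : Bool) (x : ℝ) :
    boolSign b * Real.sign x = Real.sign (boolSign b * x) := by
  cases b <;> simp [boolSign, Real.sign_neg]

lemma sum_bernoulliWeight (q : ℝ) : ∑ b, bernoulliWeight q b = 1 := by
  simp [bernoulliWeight]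

lemma bernoulliWeight_nonneg {q : ℝ} (h0 : 0 ≤ q) (h1 : q ≤ 1) (b : Bool) :
    0 ≤ bernoulliWeight q b := by
  cases b <;> simp [bernoulliWeight] <;> linarith

lemma one_sub_add_mul_cosh_le_exp {q : ℝ} (h1 : q ≤ 1) (u : ℝ) :
    1 - q + q * cosh u ≤ exp (u ^ 2 / 2) := by
  nlinarith [one_le_cosh u, cosh_le_exp_half_sq u]

lemma zeroOneLoss_add_zeroOneLoss_neg (x : ℝ) : zeroOneLoss x + zeroOneLoss (-x) = 1 := by
  rw [zeroOneLoss, zeroOneLoss, Real.sign_neg]; ring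

lemma zeroOneLoss_le_exp {t : ℝ} (ht : 0 ≤ t) (x : ℝ) : zeroOneLoss x ≤ exp (-(t * x)) := by
  rcases lt_trichotomy x 0 with hx | rfl | hx
  · rw [zeroOneLoss, Real.sign_of_neg hx]
    linarith [add_one_le_exp (-(t * x)), mul_nonpos_of_nonneg_of_nonpos ht hx.le]
  · norm_num [zeroOneLoss]
  · rw [zeroOneLoss, Real.sign_of_pos hx]
    linarith [exp_pos (-(t * x))]

section MaskedRademacher

variable {ι : Type*} [Fintype ι] {ρ w : ι → ℝ}

def maskWeight (ρ : ι → ℝ) (c : ι → Bool) : ℝ := ∏ i, bernoulliWeight (ρ i) (c i)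

lemma maskWeight_nonneg (hρ0 : ∀ i, 0 ≤ ρ i) (hρ1 : ∀ i, ρ i ≤ 1) (c : ι → Bool) :
    0 ≤ maskWeight ρ c :=
  prod_nonneg fun i _ => bernoulliWeight_nonneg (hρ0 i) (hρ1 i) (c i)

def maskedSum (w : ι → ℝ) (c ξ : ι → Bool) : ℝ := ∑ i, w i * boolBit (c i) * boolSign (ξ i)

lemma maskedSum_not (c ξ : ι → Bool) : maskedSum w c (fun i => !ξ i) = -maskedSum w c ξ := by
  simp only [maskedSum, ← sum_neg_distrib]
  exact sum_congr rfl fun i _ => by cases ξ i <;> simp [boolSign]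

variable [DecidableEq ι]

/-- `𝔼[g (∑ i, w i * m i * ξ i)]` for independent masks `m i ~ Bernoulli (ρ i)` and independent
uniform signs `ξ i`. -/
noncomputable def maskedExpect (ρ w : ι → ℝ) (g : ℝ → ℝ) : ℝ :=
  ∑ c, ∑ ξ, maskWeight ρ c * (1 / 2) ^ Fintype.card ι * g (maskedSum w c ξ)

lemma sum_maskWeight : ∑ c, maskWeight ρ c = 1 := by
  simp only [maskWeight, ← Fintype.prod_sum, sum_bernoulliWeight, prod_const_one]

lemma sum_half_pow_card : ∑ _ξ : ι → Bool, (1 / 2 : ℝ) ^ Fintype.card ι = 1 := by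
  rw [sum_const, card_univ, Fintype.card_fun, Fintype.card_bool, nsmul_eq_mul]
  push_cast
  rw [← mul_pow]; norm_num

lemma maskedExpect_const (a : ℝ) : maskedExpect ρ w (fun _ => a) = a := by
  calc maskedExpect ρ w (fun _ => a)
      = ∑ c, maskWeight ρ c * a * ∑ _ξ : ι → Bool, (1 / 2 : ℝ) ^ Fintype.card ι := by
        simp only [maskedExpect, mul_sum]
        exact sum_congr rfl fun _ _ => sum_congr rfl fun _ _ => by ring
    _ = a := by rw [sum_half_pow_card, ← sum_mul, ← sum_mul, sum_maskWeight, one_mul, mul_one]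

lemma maskedExpect_add (g h : ℝ → ℝ) :
    maskedExpect ρ w (fun s => g s + h s) = maskedExpect ρ w g + maskedExpect ρ w h := by
  simp only [maskedExpect, mul_add, sum_add_distrib]

lemma maskedExpect_const_mul (a : ℝ) (g : ℝ → ℝ) :
    maskedExpect ρ w (fun s => a * g s) = a * maskedExpect ρ w g := by
  simp only [maskedExpect, mul_sum]
  exact sum_congr rfl fun _ _ => sum_congr rfl fun _ _ => by ring

lemma maskedExpect_mono (hρ0 : ∀ i, 0 ≤ ρ i) (hρ1 : ∀ i, ρ i ≤ 1) {g h : ℝ → ℝ}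
    (hgh : ∀ s, g s ≤ h s) : maskedExpect ρ w g ≤ maskedExpect ρ w h :=
  sum_le_sum fun c _ => sum_le_sum fun ξ _ => mul_le_mul_of_nonneg_left (hgh _)
    (mul_nonneg (maskWeight_nonneg hρ0 hρ1 c) (by positivity))

lemma sum_comp_not (g : (ι → Bool) → ℝ) : ∑ ξ : ι → Bool, g (fun i => !ξ i) = ∑ ξ, g ξ :=
  (show Function.Involutive fun (ξ : ι → Bool) i => !ξ i from
    fun _ => funext fun _ => Bool.not_not _).bijective.sum_comp g

lemma maskedExpect_comp_neg (g : ℝ → ℝ) :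
    maskedExpect ρ w (fun s => g (-s)) = maskedExpect ρ w g := by
  refine sum_congr rfl fun c _ => ?_
  rw [← sum_comp_not]
  simp only [maskedSum_not, neg_neg]

lemma maskedExpect_exp_mul (t : ℝ) :
    maskedExpect ρ w (fun s => exp (t * s)) = ∏ i, (1 - ρ i + ρ i * cosh (t * w i)) := by
  set f : ι → Bool → Bool → ℝ := fun i a b =>
    bernoulliWeight (ρ i) a / 2 * exp (t * (w i * boolBit a * boolSign b))
  have hfactor : ∀ c ξ : ι → Bool, maskWeight ρ c * (1 / 2) ^ Fintype.card ι *
      exp (t * maskedSum w c ξ) = ∏ i, f i (c i) (ξ i) := by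
    intro c ξ
    simp only [f, div_eq_mul_inv, prod_mul_distrib, prod_const, card_univ, maskWeight,
      maskedSum, mul_sum, exp_sum, one_mul]
  calc maskedExpect ρ w (fun s => exp (t * s))
      = ∑ c : ι → Bool, ∏ i, ∑ b, f i (c i) b := by
        simp only [maskedExpect, hfactor, Fintype.prod_sum]
    _ = ∏ i, ∑ a, ∑ b, f i a b := (Fintype.prod_sum fun i a => ∑ b, f i a b).symm
    _ = ∏ i, (1 - ρ i + ρ i * cosh (t * w i)) := by
        refine prod_congr rfl fun i _ => ?_
        simp only [f, Fintype.sum_bool, bernoulliWeight, boolBit, boolSign, cosh_eq]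
        norm_num
        ring

lemma maskedExpect_zeroOneLoss : maskedExpect ρ w zeroOneLoss = 1 / 2 := by
  have h := maskedExpect_add (ρ := ρ) (w := w) zeroOneLoss (fun s => zeroOneLoss (-s))
  simp only [zeroOneLoss_add_zeroOneLoss_neg, maskedExpect_const, maskedExpect_comp_neg] at h
  linarith

lemma maskedExpect_zeroOneLoss_add_le (hρ0 : ∀ i, 0 ≤ ρ i) (hρ1 : ∀ i, ρ i ≤ 1) {x : ℝ}
    (hx : 0 < x) (hw : 0 < ∑ i, w i ^ 2) :
    maskedExpect ρ w (fun s => zeroOneLoss (x + s)) ≤ exp (-(x ^ 2 / (2 * ∑ i, w i ^ 2))) := by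
  set W := ∑ i, w i ^ 2
  -- the Chernoff parameter minimising `-t x + t² W / 2`
  set t := x / W
  have ht : 0 ≤ t := by positivity
  calc maskedExpect ρ w (fun s => zeroOneLoss (x + s))
      ≤ maskedExpect ρ w (fun s => exp (-(t * x)) * exp (-t * s)) :=
        maskedExpect_mono hρ0 hρ1 fun s => by
          rw [← exp_add]
          convert zeroOneLoss_le_exp ht (x + s) using 2
          ring
    _ = exp (-(t * x)) * ∏ i, (1 - ρ i + ρ i * cosh (-t * w i)) := by
        rw [maskedExpect_const_mul, maskedExpect_exp_mul]
    _ ≤ exp (-(t * x)) * ∏ i, exp ((-t * w i) ^ 2 / 2) := by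
        refine mul_le_mul_of_nonneg_left (prod_le_prod (fun i _ => ?_) fun i _ =>
          one_sub_add_mul_cosh_le_exp (hρ1 i) _) (exp_pos _).le
        nlinarith [one_le_cosh (-t * w i), hρ0 i, hρ1 i]
    _ = exp (-(x ^ 2 / (2 * W))) := by
        rw [← exp_sum, ← exp_add]
        congr 1
        simp only [neg_mul, neg_sq, mul_pow, ← sum_div, ← mul_sum, t]
        field_simp
        ring

lemma sum_bernoulliWeight_mul_maskedExpect_le {P x : ℝ} (hP0 : 0 ≤ P) (hρ0 : ∀ i, 0 ≤ ρ i)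
    (hρ1 : ∀ i, ρ i ≤ 1) (hx : 0 < x) (hw : 0 < ∑ i, w i ^ 2) :
    ∑ a, bernoulliWeight P a * maskedExpect ρ w (fun s => zeroOneLoss (x * boolBit a + s)) ≤
      (1 - P) / 2 + P * exp (-(x ^ 2 / (2 * ∑ i, w i ^ 2))) := by
  simp only [Fintype.sum_bool, bernoulliWeight, boolBit, if_true, Bool.false_eq_true, if_false,
    mul_one, mul_zero, zero_add]
  rw [maskedExpect_zeroOneLoss]
  nlinarith [mul_le_mul_of_nonneg_left (maskedExpect_zeroOneLoss_add_le hρ0 hρ1 hx hw) hP0]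

end MaskedRademacher

lemma half_one_sub_add_mul_exp_neg_le {P s : ℝ} (hP0 : 0 ≤ P) (hP1 : P ≤ 1) (hs0 : 0 ≤ s)
    (hs2 : s ≤ 2) : (1 - P) / 2 + P * exp (-s) ≤ 2 * exp (-(P ^ 2 * s)) := by
  set v := exp (-(P ^ 2 * s))
  have hexp_s : exp (-s) ≤ v :=
    exp_le_exp.2 (by nlinarith [mul_nonneg (sub_nonneg.2 (pow_le_one₀ (n := 2) hP0 hP1)) hs0])
  have hv : (1 - P / 2) ^ 4 ≤ v :=
    calc (1 - P / 2) ^ 4 ≤ exp (-(P / 2)) ^ 4 :=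
          pow_le_pow_left₀ (by linarith) (by linarith [add_one_le_exp (-(P / 2))]) 4
      _ = exp (-(2 * P)) := by rw [← exp_nat_mul]; ring_nf
      _ ≤ v := exp_le_exp.2 (by nlinarith)
  have hpoly : (1 - P) / 2 ≤ (2 - P) * (1 - P / 2) ^ 4 := by
    -- with `P = 2 - 2q`, `q ∈ [1/2, 1]`, this is `2q - 1 ≤ 4q⁵`: use the tangent of `q⁵` at `3/5`
    obtain ⟨q, rfl⟩ : ∃ q, P = 2 - 2 * q := ⟨1 - P / 2, by ring⟩
    have hq : 1 / 2 ≤ q := by linarith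
    nlinarith [mul_nonneg (sq_nonneg (q - 3 / 5))
      (by positivity : 0 ≤ q ^ 3 + 6 / 5 * q ^ 2 + 27 / 25 * q + 108 / 125)]
  nlinarith [mul_le_mul_of_nonneg_left hexp_s hP0,
    mul_le_mul_of_nonneg_left hv (by linarith : (0 : ℝ) ≤ 2 - P)]

lemma half_one_sub_add_mul_exp_le {P A : ℝ} (hP0 : 0 ≤ P) (hP1 : P ≤ 1) (hA : 0 < A) :
    (1 - P) / 2 + P * exp (-(1 / (2 * A))) ≤ 2 * exp (-2 * P ^ 2 / (4 * A + 1)) := by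
  have hs : 2 / (4 * A + 1) ≤ 1 / (2 * A) := by
    rw [div_le_div_iff₀ (by positivity) (by positivity)]; linarith
  have hs2 : 2 / (4 * A + 1) ≤ 2 := div_le_self (by norm_num) (by linarith)
  calc (1 - P) / 2 + P * exp (-(1 / (2 * A)))
      ≤ (1 - P) / 2 + P * exp (-(2 / (4 * A + 1))) := by gcongr
    _ ≤ 2 * exp (-(P ^ 2 * (2 / (4 * A + 1)))) :=
        half_one_sub_add_mul_exp_neg_le hP0 hP1 (by positivity) hs2
    _ = 2 * exp (-2 * P ^ 2 / (4 * A + 1)) := by ring_nf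

section Partition

variable {Ω β ι : Type*} [MeasurableSpace Ω] [MeasurableSpace β] [MeasurableSingletonClass β]
  [Fintype ι] {μ : Measure Ω} [IsProbabilityMeasure μ]

lemma integral_comp_eq_sum_of_injective {X : Ω → β} (hX : Measurable X) {e : ι → β}
    (he : Function.Injective e) (hmass : ∑ i, μ.real (X ⁻¹' {e i}) = 1) (F : β → ℝ) :
    ∫ ω, F (X ω) ∂μ = ∑ i, μ.real (X ⁻¹' {e i}) * F (e i) := by
  have hmeas : ∀ i, MeasurableSet (X ⁻¹' {e i}) := fun i => hX (measurableSet_singleton _)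
  have hdisj : Pairwise (Function.onFun Disjoint fun i => X ⁻¹' {e i}) := fun i j hij =>
    (Set.disjoint_singleton.2 (he.ne hij)).preimage X
  have hcover : ∀ᵐ ω ∂μ, ω ∈ ⋃ i, X ⁻¹' {e i} := by
    refine mem_ae_iff.2 ((prob_compl_eq_zero_iff (MeasurableSet.iUnion hmeas)).2 ?_)
    rw [← ENNReal.toReal_eq_one_iff, ← measureReal_def, measureReal_iUnion_fintype hdisj hmeas,
      hmass]
  calc ∫ ω, F (X ω) ∂μ = ∫ ω, ∑ i, (X ⁻¹' {e i}).indicator (fun _ => F (e i)) ω ∂μ := by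
        refine integral_congr_ae (hcover.mono fun ω hω => ?_)
        obtain ⟨i, hi : X ω = e i⟩ := Set.mem_iUnion.1 hω
        classical
        simp only [Set.indicator_apply, Set.mem_preimage, Set.mem_singleton_iff, hi, he.eq_iff,
          sum_ite_eq, mem_univ, if_true]
    _ = ∑ i, μ.real (X ⁻¹' {e i}) * F (e i) := by
        rw [integral_finsetSum _ fun i _ => (integrable_const _).indicator (hmeas i)]
        simp only [integral_indicator_const _ (hmeas _), smul_eq_mul]

end Partition

lemma boolSign_mul_add_sum_eq {ι : Type*} [Fintype ι] (w0 : ℝ) (w : ι → ℝ) (y a : Bool)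
    (c ε : ι → Bool) :
    boolSign y * (w0 * boolBit a * boolSign y + ∑ i, w i * boolBit (c i) * boolSign (ε i)) =
      w0 * boolBit a + maskedSum w c fun i => ε i == y := by
  simp only [maskedSum, mul_add, mul_sum, ← boolSign_mul_boolSign y]
  congr 1
  · linear_combination w0 * boolBit a * boolSign_mul_self y
  · exact sum_congr rfl fun i _ => by ring

section DebiasedModel

variable {ι : Type*} [Fintype ι] [DecidableEq ι]

/-- Probability of `σ = (y, a, c, ε)`: label, invariant mask, spurious masks, spurious features. -/
noncomputable def debiasedWeight (P : ℝ) (ρ : ι → ℝ) (σ : Bool × Bool × (ι → Bool) × (ι → Bool)) :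
    ℝ :=
  1 / 2 * (1 / 2) ^ Fintype.card ι * bernoulliWeight P σ.2.1 * maskWeight ρ σ.2.2.1

lemma sum_beq_comp (y : Bool) (g : (ι → Bool) → ℝ) :
    ∑ ε : ι → Bool, g (fun i => ε i == y) = ∑ ξ, g ξ := by
  cases y
  · simpa using sum_comp_not g
  · simp

lemma sum_debiasedWeight_mul_eq (P : ℝ) (ρ w : ι → ℝ) (G : Bool → ℝ → ℝ) :
    ∑ σ, debiasedWeight P ρ σ * G σ.2.1 (maskedSum w σ.2.2.1 fun i => σ.2.2.2 i == σ.1) =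
      ∑ a, bernoulliWeight P a * maskedExpect ρ w (G a) := by
  have hy : ∀ y a, ∑ c, ∑ ε : ι → Bool, debiasedWeight P ρ (y, a, c, ε) *
      G a (maskedSum w c fun i => ε i == y) =
      1 / 2 * (bernoulliWeight P a * maskedExpect ρ w (G a)) := by
    intro y a
    simp only [debiasedWeight, maskedExpect, mul_sum]
    refine sum_congr rfl fun c _ => ?_
    rw [← sum_beq_comp y fun ξ => 1 / 2 * (bernoulliWeight P a *
      (maskWeight ρ c * (1 / 2) ^ Fintype.card ι * G a (maskedSum w c ξ)))]
    exact sum_congr rfl fun ε _ => by ring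
  simp only [Fintype.sum_prod_type]
  simp only [hy, Fintype.sum_bool]
  ring

theorem half_integral_eq_sum_maskedExpect {Ω : Type*} [MeasurableSpace Ω] {μ : Measure Ω}
    [IsProbabilityMeasure μ] {Y mInv : Ω → ℝ} {Z mSp : ι → Ω → ℝ} (hY : Measurable Y)
    (hZ : ∀ i, Measurable (Z i)) (hmInv : Measurable mInv) (hmSp : ∀ i, Measurable (mSp i))
    {πInv : ℝ} {πSp : ι → ℝ}
    (hlaw : ∀ (y a : Bool) (c ε : ι → Bool), μ.real {ω | Y ω = boolSign y ∧
      (∀ i, Z i ω = boolSign (ε i)) ∧ mInv ω = boolBit a ∧ ∀ i, mSp i ω = boolBit (c i)} =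
      debiasedWeight πInv πSp (y, a, c, ε))
    (wInv : ℝ) (wSp : ι → ℝ) :
    1 / 2 * ∫ ω, (1 - Y ω * Real.sign (wInv * mInv ω * Y ω + ∑ i, wSp i * mSp i ω * Z i ω)) ∂μ =
      ∑ a, bernoulliWeight πInv a *
        maskedExpect πSp wSp (fun s => zeroOneLoss (wInv * boolBit a + s)) := by
  set X : Ω → ℝ × ℝ × (ι → ℝ) × (ι → ℝ) := fun ω =>
    (Y ω, mInv ω, fun i => mSp i ω, fun i => Z i ω)
  set e : Bool × Bool × (ι → Bool) × (ι → Bool) → ℝ × ℝ × (ι → ℝ) × (ι → ℝ) := fun σ =>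
    (boolSign σ.1, boolBit σ.2.1, fun i => boolBit (σ.2.2.1 i), fun i => boolSign (σ.2.2.2 i))
  set F : ℝ × ℝ × (ι → ℝ) × (ι → ℝ) → ℝ := fun v =>
    1 - v.1 * Real.sign (wInv * v.2.1 * v.1 + ∑ i, wSp i * v.2.2.1 i * v.2.2.2 i)
  have hX : Measurable X := hY.prodMk <| hmInv.prodMk <|
    (measurable_pi_lambda _ hmSp).prodMk (measurable_pi_lambda _ hZ)
  have he : Function.Injective e := by
    rintro ⟨y, a, c, ε⟩ ⟨y', a', c', ε'⟩ h
    simp only [e, Prod.mk.injEq, funext_iff, boolSign_injective.eq_iff,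
      boolBit_injective.eq_iff] at h
    obtain ⟨rfl, rfl, hc, hε⟩ := h
    rw [funext hc, funext hε]
  have hprob : ∀ σ, μ.real (X ⁻¹' {e σ}) = debiasedWeight πInv πSp σ := by
    rintro ⟨y, a, c, ε⟩
    rw [← hlaw y a c ε]
    congr 1
    ext ω
    simp only [X, e, Set.mem_preimage, Set.mem_singleton_iff, Prod.mk.injEq, funext_iff,
      Set.mem_ofPred_eq]
    tauto
  have hmass : ∑ σ, μ.real (X ⁻¹' {e σ}) = 1 := by
    have h := sum_debiasedWeight_mul_eq πInv πSp wSp fun _ _ => 1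
    simp only [mul_one, maskedExpect_const, sum_bernoulliWeight] at h
    simp only [hprob, h]
  have hloss : ∀ σ, F (e σ) =
      2 * zeroOneLoss (wInv * boolBit σ.2.1 + maskedSum wSp σ.2.2.1 fun i => σ.2.2.2 i == σ.1) := by
    rintro ⟨y, a, c, ε⟩
    simp only [F, e]
    rw [boolSign_mul_sign, boolSign_mul_add_sum_eq, zeroOneLoss]
    ring
  calc 1 / 2 * ∫ ω, (1 - Y ω * Real.sign (wInv * mInv ω * Y ω + ∑ i, wSp i * mSp i ω * Z i ω)) ∂μ
      = 1 / 2 * ∫ ω, F (X ω) ∂μ := rfl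
    _ = ∑ σ, debiasedWeight πInv πSp σ * zeroOneLoss
          (wInv * boolBit σ.2.1 + maskedSum wSp σ.2.2.1 fun i => σ.2.2.2 i == σ.1) := by
        rw [integral_comp_eq_sum_of_injective hX he hmass, mul_sum]
        exact sum_congr rfl fun σ _ => by rw [hloss, hprob]; ring
    _ = _ := sum_debiasedWeight_mul_eq πInv πSp wSp fun a s => zeroOneLoss (wInv * boolBit a + s)

end DebiasedModel

lemma mixture_weights_eq_half {p φ : ℝ} (hp : p ≠ 0) (hφ : φ = 1 - 1 / (2 * p)) :
    (1 - φ) * p = 1 / 2 ∧ φ + (1 - φ) * (1 - p) = 1 / 2 := by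
  subst hφ
  constructor <;> field_simp <;> ring

theorem stmt_8_general
    {Ω : Type*} [MeasurableSpace Ω] (μ : MeasureTheory.Measure Ω)
    [MeasureTheory.IsProbabilityMeasure μ]
    (D : ℕ) (hD : 0 < D) (p : ℝ) (hp : 1 / 2 < p)
    (φ : ℝ)
    (πInv : ℝ) (πSp : Fin D → ℝ)
    (hπInv0 : 0 ≤ πInv) (hπInv1 : πInv ≤ 1)
    (hπSp0 : ∀ i, 0 ≤ πSp i) (hπSp1 : ∀ i, πSp i ≤ 1)
    (Y : Ω → ℝ) (Z : Fin D → Ω → ℝ) (mInv : Ω → ℝ) (mSp : Fin D → Ω → ℝ)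
    (hY : Measurable Y) (hZ : ∀ i, Measurable (Z i))
    (hmInv : Measurable mInv) (hmSp : ∀ i, Measurable (mSp i))
    -- joint law: `Y` uniform on `{-1,1}`; given `Y`, `Z i` i.i.d. with the mixture law;
    -- masks Bernoulli, mutually independent and independent of `(Y, Z)`.
    (hlaw : ∀ (y : Bool) (ε : Fin D → Bool) (a : Bool) (c : Fin D → Bool),
      μ {ω | Y ω = (if y then (1 : ℝ) else -1) ∧
             (∀ i, Z i ω = (if ε i then (1 : ℝ) else -1)) ∧
             mInv ω = (if a then (1 : ℝ) else 0) ∧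
             (∀ i, mSp i ω = (if c i then (1 : ℝ) else 0))} =
        ENNReal.ofReal ((1 / 2) *
          (∏ i, (if ε i = y then (1 - φ) * p else φ + (1 - φ) * (1 - p))) *
          (if a then πInv else 1 - πInv) *
          (∏ i, (if c i then πSp i else 1 - πSp i))))
    (wInv : ℝ) (hwInv : 0 < wInv) (wSp : Fin D → ℝ) (hwSp : ∀ i, 0 < wSp i)
    (O : Ω → ℝ)
    (hO : ∀ ω, O ω = wInv * mInv ω * Y ω + ∑ i, wSp i * mSp i ω * Z i ω)
    (ℓ : ℝ)
    (hℓ : ℓ = (1 / 2) * ∫ ω, (1 - Y ω * Real.sign (O ω)) ∂μ)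
    (hφeq : φ = 1 - 1 / (2 * p)) :
    ℓ ≤ 2 * Real.exp (-2 * πInv ^ 2 / (4 * (∑ i, (wSp i / wInv) ^ 2) + 1)) := by
  obtain ⟨hsame, hflip⟩ := mixture_weights_eq_half (by linarith : (0 : ℝ) < p).ne' hφeq
  have hdebiased : ∀ (y a : Bool) (c ε : Fin D → Bool), μ.real {ω | Y ω = boolSign y ∧
      (∀ i, Z i ω = boolSign (ε i)) ∧ mInv ω = boolBit a ∧ ∀ i, mSp i ω = boolBit (c i)} =
      debiasedWeight πInv πSp (y, a, c, ε) := by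
    intro y a c ε
    refine (congrArg ENNReal.toReal (hlaw y ε a c)).trans ?_
    simp only [hsame, hflip, ite_self, prod_const, card_univ, Fintype.card_fin, debiasedWeight]
    exact ENNReal.toReal_ofReal (mul_nonneg (mul_nonneg (by positivity)
      (bernoulliWeight_nonneg hπInv0 hπInv1 a)) (maskWeight_nonneg hπSp0 hπSp1 c))
  have hw : 0 < ∑ i, wSp i ^ 2 :=
    sum_pos (fun i _ => pow_pos (hwSp i) 2) (univ_nonempty_iff.2 ⟨⟨0, hD⟩⟩)
  have hα : ∑ i, (wSp i / wInv) ^ 2 = (∑ i, wSp i ^ 2) / wInv ^ 2 := by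
    simp only [div_pow, sum_div]
  simp only [hO] at hℓ
  rw [hℓ, half_integral_eq_sum_maskedExpect hY hZ hmInv hmSp hdebiased wInv wSp]
  calc _ ≤ (1 - πInv) / 2 + πInv * exp (-(wInv ^ 2 / (2 * ∑ i, wSp i ^ 2))) :=
        sum_bernoulliWeight_mul_maskedExpect_le hπInv0 hπSp0 hπSp1 hwInv hw
    _ = (1 - πInv) / 2 + πInv * exp (-(1 / (2 * ∑ i, (wSp i / wInv) ^ 2))) := by
        rw [hα]; field_simp
    _ ≤ _ := half_one_sub_add_mul_exp_le hπInv0 hπInv1 (by rw [hα]; positivity)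

/-- **Theorem 2, perfectly debiased training bound.** -/
theorem stmt_8
    {Ω : Type*} [MeasurableSpace Ω] (μ : MeasureTheory.Measure Ω)
    [MeasureTheory.IsProbabilityMeasure μ]
    (D : ℕ) (hD : 0 < D) (p : ℝ) (hp : 1 / 2 < p) (hp1 : p ≤ 1)
    (φ : ℝ) (hφ0 : 0 ≤ φ) (hφ1 : φ ≤ 1)
    (πInv : ℝ) (πSp : Fin D → ℝ)
    (hπInv0 : 0 ≤ πInv) (hπInv1 : πInv ≤ 1)
    (hπSp0 : ∀ i, 0 ≤ πSp i) (hπSp1 : ∀ i, πSp i ≤ 1)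
    (Y : Ω → ℝ) (Z : Fin D → Ω → ℝ) (mInv : Ω → ℝ) (mSp : Fin D → Ω → ℝ)
    (hY : Measurable Y) (hZ : ∀ i, Measurable (Z i))
    (hmInv : Measurable mInv) (hmSp : ∀ i, Measurable (mSp i))
    -- joint law: `Y` uniform on `{-1,1}`; given `Y`, `Z i` i.i.d. with the mixture law;
    -- masks Bernoulli, mutually independent and independent of `(Y, Z)`.
    (hlaw : ∀ (y : Bool) (ε : Fin D → Bool) (a : Bool) (c : Fin D → Bool),
      μ {ω | Y ω = (if y then (1 : ℝ) else -1) ∧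
             (∀ i, Z i ω = (if ε i then (1 : ℝ) else -1)) ∧
             mInv ω = (if a then (1 : ℝ) else 0) ∧
             (∀ i, mSp i ω = (if c i then (1 : ℝ) else 0))} =
        ENNReal.ofReal ((1 / 2) *
          (∏ i, (if ε i = y then (1 - φ) * p else φ + (1 - φ) * (1 - p))) *
          (if a then πInv else 1 - πInv) *
          (∏ i, (if c i then πSp i else 1 - πSp i))))
    (wInv : ℝ) (hwInv : 0 < wInv) (wSp : Fin D → ℝ) (hwSp : ∀ i, 0 < wSp i)
    (O : Ω → ℝ)
    (hO : ∀ ω, O ω = wInv * mInv ω * Y ω + ∑ i, wSp i * mSp i ω * Z i ω)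
    (ℓ : ℝ)
    (hℓ : ℓ = (1 / 2) * ∫ ω, (1 - Y ω * Real.sign (O ω)) ∂μ)
    (hO0 : μ {ω | O ω = 0} = 0)
    (hφeq : φ = 1 - 1 / (2 * p)) :
    ℓ ≤ 2 * Real.exp (-2 * πInv ^ 2 / (4 * (∑ i, (wSp i / wInv) ^ 2) + 1)) :=
  stmt_8_general μ D hD p hp φ πInv πSp hπInv0 hπInv1 hπSp0 hπSp1 Y Z mInv mSp hY hZ hmInv hmSp hlaw
    wInv hwInv wSp hwSp O hO ℓ hℓ hφeq
end

section
/- (Proposition 1, lower bound and divergence of the invariant weight) Any solution of the gradient-flow system satisfies u(t) ≥ log( e^{u(0)} + (4p(1-p))^{D/2} · t ) for all t ≥ 0; in particular u is strictly increasing and u(t) → +∞ as t → ∞. -/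
/-!
Each factor `p e^{-v} + (1-p) e^{v}` of `u'` is at least `2√(p(1-p))` by AM-GM, since the two
summands multiply to `p(1-p)`. Hence `(e^u)' = e^u u' = ∏ᵢ g(vᵢ) ≥ (4p(1-p))^{D/2}`, and integrating
gives `e^{u(t)} ≥ e^{u(0)} + (4p(1-p))^{D/2} t`.
-/

open Real Set Filter

theorem sqrt_four_mul_one_sub_le {p : ℝ} (hp0 : 0 ≤ p) (hp1 : p ≤ 1) (w : ℝ) :
    √(4 * p * (1 - p)) ≤ p * exp (-w) + (1 - p) * exp w := by
  have hprod : p * exp (-w) * ((1 - p) * exp w) = p * (1 - p) := by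
    rw [mul_mul_mul_comm, ← exp_add, neg_add_cancel, exp_zero, mul_one]
  have ha : 0 ≤ p * exp (-w) := by positivity
  have hb : 0 ≤ (1 - p) * exp w := mul_nonneg (by linarith) (exp_pos w).le
  rw [sqrt_le_left (add_nonneg ha hb)]
  nlinarith [sq_nonneg (p * exp (-w) - (1 - p) * exp w)]

theorem rpow_card_div_two_le_prod {ι : Type*} [Fintype ι] {p : ℝ} (hp0 : 0 ≤ p) (hp1 : p ≤ 1)
    (w : ι → ℝ) :
    (4 * p * (1 - p)) ^ ((Fintype.card ι : ℝ) / 2) ≤ ∏ i, (p * exp (-w i) + (1 - p) * exp (w i)) := by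
  have h4 : 0 ≤ 4 * p * (1 - p) := mul_nonneg (by positivity) (by linarith)
  rw [rpow_div_two_eq_sqrt _ h4, rpow_natCast, ← Finset.card_univ, ← Finset.prod_const]
  exact Finset.prod_le_prod (fun _ _ => sqrt_nonneg _)
    (fun i _ => sqrt_four_mul_one_sub_le hp0 hp1 (w i))

theorem exp_add_mul_sub_le_exp {u u' : ℝ → ℝ} {a c : ℝ}
    (hu : ∀ t ∈ Ici a, HasDerivWithinAt u (u' t) (Ici a) t)
    (hc : ∀ t ∈ Ioi a, c ≤ exp (u t) * u' t) {t : ℝ} (ht : a ≤ t) :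
    exp (u a) + c * (t - a) ≤ exp (u t) := by
  have hmono : MonotoneOn (fun s => exp (u s) - c * s) (Ici a) := by
    refine monotoneOn_of_hasDerivWithinAt_nonneg (f' := fun s => exp (u s) * u' s - c)
      (convex_Ici a) ?_ ?_ ?_
    · exact (continuous_exp.comp_continuousOn fun s hs => (hu s hs).continuousWithinAt).sub
        (continuous_const_mul c).continuousOn
    · intro s hs
      rw [interior_Ici] at hs ⊢
      have hus := (hu s (mem_Ici_of_Ioi hs)).mono Ioi_subset_Ici_self
      exact hus.exp.sub (by simpa using (hasDerivWithinAt_id s _).const_mul c)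
    · intro s hs
      rw [interior_Ici] at hs
      exact sub_nonneg.2 (hc s hs)
  have h : exp (u a) - c * a ≤ exp (u t) - c * t := hmono self_mem_Ici ht ht
  linarith

theorem stmt_11_general
    (D : ℕ) (p : ℝ) (hp : 1 / 2 < p) (hp1 : p < 1)
    (u : ℝ → ℝ) (v : Fin D → ℝ → ℝ)
    -- gradient-flow system on `[0, ∞)`
    (hu : ∀ t ∈ Set.Ici (0 : ℝ),
      HasDerivWithinAt u
        (Real.exp (-u t) * ∏ i, (p * Real.exp (-v i t) + (1 - p) * Real.exp (v i t)))
        (Set.Ici 0) t) :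
    (∀ t ∈ Set.Ici (0 : ℝ),
      Real.log (Real.exp (u 0) + (4 * p * (1 - p)) ^ ((D : ℝ) / 2) * t) ≤ u t) ∧
    StrictMonoOn u (Set.Ici 0) ∧
    Filter.Tendsto u Filter.atTop Filter.atTop := by
  set c := (4 * p * (1 - p)) ^ ((D : ℝ) / 2)
  have hc : 0 < c := rpow_pos_of_pos (by nlinarith) _
  have hprod (t : ℝ) : c ≤ ∏ i, (p * exp (-v i t) + (1 - p) * exp (v i t)) := by
    simpa using rpow_card_div_two_le_prod (by linarith) hp1.le (fun i => v i t)
  have hlow : ∀ t ∈ Ici (0 : ℝ), log (exp (u 0) + c * t) ≤ u t := by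
    intro t ht
    have h := exp_add_mul_sub_le_exp hu (fun s _ => by
      rw [← mul_assoc, ← exp_add, add_neg_cancel, exp_zero, one_mul]
      exact hprod s) ht
    rw [sub_zero] at h
    exact (log_le_iff_le_exp (by positivity [mem_Ici.1 ht])).2 h
  refine ⟨hlow, ?_, ?_⟩
  · refine strictMonoOn_of_hasDerivWithinAt_pos (convex_Ici 0)
      (f' := fun t => exp (-u t) * ∏ i, (p * exp (-v i t) + (1 - p) * exp (v i t)))
      (fun t ht => (hu t ht).continuousWithinAt) (fun t ht => ?_) (fun t _ => ?_)
    · rw [interior_Ici] at ht ⊢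
      exact (hu t (mem_Ici_of_Ioi ht)).mono Ioi_subset_Ici_self
    · exact mul_pos (exp_pos _) (hc.trans_le (hprod t))
  · refine tendsto_atTop_mono' atTop (eventually_atTop.2 ⟨0, hlow⟩) ?_
    exact tendsto_log_atTop.comp
      (tendsto_atTop_add_const_left _ _ (tendsto_id.const_mul_atTop hc))

/-- **Proposition 1, lower bound and divergence of the invariant weight.** -/
theorem stmt_11
    (D : ℕ) (hD : 0 < D) (p : ℝ) (hp : 1 / 2 < p) (hp1 : p < 1)
    (u : ℝ → ℝ) (v : Fin D → ℝ → ℝ)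
    -- gradient-flow system on `[0, ∞)`
    (hu : ∀ t ∈ Set.Ici (0 : ℝ),
      HasDerivWithinAt u
        (Real.exp (-u t) * ∏ i, (p * Real.exp (-v i t) + (1 - p) * Real.exp (v i t)))
        (Set.Ici 0) t)
    (hv : ∀ (j : Fin D), ∀ t ∈ Set.Ici (0 : ℝ),
      HasDerivWithinAt (v j)
        (Real.exp (-u t) * (p * Real.exp (-v j t) - (1 - p) * Real.exp (v j t)) *
          ∏ i ∈ Finset.univ.erase j,
            (p * Real.exp (-v i t) + (1 - p) * Real.exp (v i t)))
        (Set.Ici 0) t) :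
    (∀ t ∈ Set.Ici (0 : ℝ),
      Real.log (Real.exp (u 0) + (4 * p * (1 - p)) ^ ((D : ℝ) / 2) * t) ≤ u t) ∧
    StrictMonoOn u (Set.Ici 0) ∧
    Filter.Tendsto u Filter.atTop Filter.atTop :=
  stmt_11_general D p hp hp1 u v hu
end

section
/- (Proposition 1, monotone convergence of the spurious weights) If 0 < v_j(0) < (1/2)·log(p/(1-p)) for every j, then for every j the function v_j is strictly increasing, satisfies v_j(t) < (1/2)·log(p/(1-p)) for all t ≥ 0, and converges to (1/2)·log(p/(1-p)) as t → ∞. -/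
/-!
Since `h' = -g`, differentiating `h(v j) * e^u` along the flow gives
`-g(v j) * h(v j) * ∏_{i ≠ j} g(v i) + h(v j) * ∏_i g(v i) = 0`,
so `h(v j) * e^u` is conserved.
It starts positive, hence `h(v j)` stays positive, which means `v j` stays below the zero
`½ log (p / (1 - p))` of `h` and keeps increasing. Moreover `(e^u)' = ∏ g(v i) ≥ (1 - p)^D`, so
`e^u → ∞` and `h(v j) = const * e^{-u} → 0`, which forces `v j` to the zero of `h`.
-/

open Real Set Filter Topology

section Calculus

variable {f f' : ℝ → ℝ} {a : ℝ}

lemma strictMonoOn_Ici_of_hasDerivWithinAt_pos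
    (hf : ∀ x ∈ Ici a, HasDerivWithinAt f (f' x) (Ici a) x) (hf' : ∀ x ∈ Ioi a, 0 < f' x) :
    StrictMonoOn f (Ici a) := by
  refine strictMonoOn_of_hasDerivWithinAt_pos (f' := f') (convex_Ici a)
    (fun x hx ↦ (hf x hx).continuousWithinAt) (fun x hx ↦ ?_) (fun x hx ↦ ?_)
  · exact (hf x (interior_subset hx)).mono interior_subset
  · exact hf' x (by simpa using hx)

lemma monotoneOn_Ici_of_hasDerivWithinAt_nonneg
    (hf : ∀ x ∈ Ici a, HasDerivWithinAt f (f' x) (Ici a) x)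
    (hf' : ∀ x ∈ Ioi a, 0 ≤ f' x) :
    MonotoneOn f (Ici a) := by
  refine monotoneOn_of_hasDerivWithinAt_nonneg (f' := f') (convex_Ici a)
    (fun x hx ↦ (hf x hx).continuousWithinAt) (fun x hx ↦ ?_) (fun x hx ↦ ?_)
  · exact (hf x (interior_subset hx)).mono interior_subset
  · exact hf' x (by simpa using hx)

lemma eq_of_hasDerivWithinAt_Ici_zero (hf : ∀ x ∈ Ici a, HasDerivWithinAt f 0 (Ici a) x) :
    ∀ x ∈ Ici a, f x = f a := fun x hx ↦
  constant_of_has_deriv_right_zero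
    (fun y hy ↦ (hf y hy.1).continuousWithinAt.mono Icc_subset_Ici_self)
    (fun y hy ↦ (hf y hy.1).mono (Ici_subset_Ici.2 hy.1)) x ⟨hx, le_rfl⟩

end Calculus

noncomputable section

namespace SpuriousFlow

variable {p : ℝ}

def g (p x : ℝ) : ℝ := p * exp (-x) + (1 - p) * exp x

def h (p x : ℝ) : ℝ := p * exp (-x) - (1 - p) * exp x

def equilibrium (p : ℝ) : ℝ := 1 / 2 * log (p / (1 - p))

lemma one_sub_le_g (hp : 1 / 2 ≤ p) (hp1 : p ≤ 1) (x : ℝ) : 1 - p ≤ g p x := by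
  unfold g
  rcases le_total 0 x with hx | hx
  · nlinarith [one_le_exp hx, exp_pos (-x)]
  · nlinarith [one_le_exp (neg_nonneg.2 hx), exp_pos x]

lemma g_pos (hp : 1 / 2 ≤ p) (hp1 : p < 1) (x : ℝ) : 0 < g p x :=
  (sub_pos.2 hp1).trans_le (one_sub_le_g hp hp1.le x)

lemma hasDerivAt_h (p x : ℝ) : HasDerivAt (h p) (-g p x) x := by
  have := (((hasDerivAt_neg x).exp).const_mul p).sub ((hasDerivAt_exp x).const_mul (1 - p))
  exact this.congr_deriv (by rw [g]; ring)

lemma exp_two_mul_equilibrium (hp0 : 0 < p) (hp1 : p < 1) :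
    exp (2 * equilibrium p) = p / (1 - p) := by
  rw [equilibrium, ← mul_assoc, mul_one_div_cancel two_ne_zero, one_mul,
    exp_log (div_pos hp0 (sub_pos.2 hp1))]

lemma h_eq (hp0 : 0 < p) (hp1 : p < 1) (x : ℝ) :
    h p x = (1 - p) * exp (-x) * (exp (2 * equilibrium p) - exp (2 * x)) := by
  have hq : 1 - p ≠ 0 := (sub_pos.2 hp1).ne'
  rw [exp_two_mul_equilibrium hp0 hp1, h, exp_neg, two_mul, exp_add]
  field_simp

lemma h_pos_iff (hp0 : 0 < p) (hp1 : p < 1) {x : ℝ} : 0 < h p x ↔ x < equilibrium p := by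
  rw [h_eq hp0 hp1, mul_pos_iff_of_pos_left (by have := sub_pos.2 hp1; positivity), sub_pos,
    exp_lt_exp]
  constructor <;> intro <;> linarith

lemma mul_sub_le_h (hp0 : 0 < p) (hp1 : p < 1) {x : ℝ} (hx : 0 ≤ x)
    (hxL : x ≤ equilibrium p) :
    2 * (1 - p) * (equilibrium p - x) ≤ h p x := by
  have hgap : exp (2 * x) * (1 + 2 * (equilibrium p - x)) ≤ exp (2 * equilibrium p) := by
    calc exp (2 * x) * (1 + 2 * (equilibrium p - x))
        ≤ exp (2 * x) * exp (2 * (equilibrium p - x)) := by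
          gcongr; linarith [add_one_le_exp (2 * (equilibrium p - x))]
      _ = exp (2 * equilibrium p) := by rw [← exp_add]; ring_nf
  have hx2 : exp (-x) * exp (2 * x) = exp x := by rw [← exp_add]; ring_nf
  calc 2 * (1 - p) * (equilibrium p - x)
      ≤ 2 * (1 - p) * (equilibrium p - x) * exp x := by
        have := one_le_exp hx
        have : 0 ≤ 2 * (1 - p) * (equilibrium p - x) := by
          have := sub_nonneg.2 hxL; positivity
        nlinarith
    _ = (1 - p) * exp (-x) * (exp (2 * x) * (1 + 2 * (equilibrium p - x)) - exp (2 * x)) := by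
        rw [← hx2]; ring
    _ ≤ (1 - p) * exp (-x) * (exp (2 * equilibrium p) - exp (2 * x)) := by gcongr
    _ = h p x := (h_eq hp0 hp1 x).symm

structure IsGradientFlow {ι : Type*} [Fintype ι] [DecidableEq ι]
    (p : ℝ) (u : ℝ → ℝ) (v : ι → ℝ → ℝ) : Prop where
  hasDerivWithinAt_u : ∀ t ∈ Ici (0 : ℝ),
    HasDerivWithinAt u (exp (-u t) * ∏ i, g p (v i t)) (Ici 0) t
  hasDerivWithinAt_v : ∀ j, ∀ t ∈ Ici (0 : ℝ),
    HasDerivWithinAt (v j)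
      (exp (-u t) * h p (v j t) * ∏ i ∈ Finset.univ.erase j, g p (v i t)) (Ici 0) t

namespace IsGradientFlow

variable {ι : Type*} [Fintype ι] [DecidableEq ι] {u : ℝ → ℝ} {v : ι → ℝ → ℝ}
  (hf : IsGradientFlow p u v)
include hf

lemma hasDerivWithinAt_exp_u {t : ℝ} (ht : t ∈ Ici (0 : ℝ)) :
    HasDerivWithinAt (fun s ↦ exp (u s)) (∏ i, g p (v i t)) (Ici 0) t := by
  have := (hf.hasDerivWithinAt_u t ht).exp
  rwa [← mul_assoc, ← exp_add, add_neg_cancel, exp_zero, one_mul] at this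

lemma h_mul_exp_eq (j : ι) :
    ∀ t ∈ Ici (0 : ℝ), h p (v j t) * exp (u t) = h p (v j 0) * exp (u 0) := by
  refine eq_of_hasDerivWithinAt_Ici_zero (f := fun t ↦ h p (v j t) * exp (u t)) fun t ht ↦ ?_
  have := ((hasDerivAt_h p (v j t)).comp_hasDerivWithinAt t (hf.hasDerivWithinAt_v j t ht)).mul
    (hf.hasDerivWithinAt_exp_u ht)
  refine this.congr_deriv ?_
  rw [← Finset.mul_prod_erase Finset.univ (fun i ↦ g p (v i t)) (Finset.mem_univ j), exp_neg,
    Function.comp_apply]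
  field_simp
  ring

lemma h_pos (hp0 : 0 < p) (hp1 : p < 1) {j : ι} (hj : v j 0 < equilibrium p) :
    ∀ t ∈ Ici (0 : ℝ), 0 < h p (v j t) := fun t ht ↦ by
  have h0 : 0 < h p (v j 0) * exp (u 0) := mul_pos ((h_pos_iff hp0 hp1).2 hj) (exp_pos _)
  rw [← hf.h_mul_exp_eq j t ht] at h0
  exact pos_of_mul_pos_left h0 (exp_pos _).le

lemma lt_equilibrium (hp0 : 0 < p) (hp1 : p < 1) {j : ι} (hj : v j 0 < equilibrium p) :
    ∀ t ∈ Ici (0 : ℝ), v j t < equilibrium p := fun t ht ↦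
  (h_pos_iff hp0 hp1).1 (hf.h_pos hp0 hp1 hj t ht)

lemma strictMonoOn (hp : 1 / 2 ≤ p) (hp1 : p < 1) {j : ι} (hj : v j 0 < equilibrium p) :
    StrictMonoOn (v j) (Ici (0 : ℝ)) := by
  refine strictMonoOn_Ici_of_hasDerivWithinAt_pos (hf.hasDerivWithinAt_v j) fun t ht ↦ ?_
  have := hf.h_pos (by linarith) hp1 hj t (Ioi_subset_Ici_self ht)
  have := Finset.prod_pos fun i (_ : i ∈ Finset.univ.erase j) ↦ g_pos hp hp1 (v i t)
  positivity

lemma add_mul_le_exp_u (hp : 1 / 2 ≤ p) (hp1 : p ≤ 1) :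
    ∀ t ∈ Ici (0 : ℝ), exp (u 0) + (1 - p) ^ Fintype.card ι * t ≤ exp (u t) := by
  have hmono : MonotoneOn (fun t ↦ exp (u t) - (1 - p) ^ Fintype.card ι * t) (Ici 0) := by
    refine monotoneOn_Ici_of_hasDerivWithinAt_nonneg
      (fun t ht ↦ (hf.hasDerivWithinAt_exp_u ht).sub ((hasDerivWithinAt_id t _).const_mul _))
      fun t _ ↦ ?_
    rw [mul_one, sub_nonneg]
    have hle := Finset.prod_le_prod (s := Finset.univ) (fun i _ ↦ (sub_nonneg.2 hp1))
      fun i _ ↦ one_sub_le_g hp hp1 (v i t)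
    rwa [Finset.prod_const, Finset.card_univ] at hle
  intro t ht
  have := hmono Set.self_mem_Ici ht ht
  simp only [mul_zero, sub_zero] at this
  linarith

lemma tendsto_exp_u_atTop (hp : 1 / 2 ≤ p) (hp1 : p < 1) :
    Tendsto (fun t ↦ exp (u t)) atTop atTop := by
  refine tendsto_atTop_mono' _ ?_ (tendsto_atTop_add_const_left _ (exp (u 0))
    (tendsto_id.const_mul_atTop (pow_pos (sub_pos.2 hp1) (Fintype.card ι))))
  filter_upwards [eventually_ge_atTop 0] with t ht
  exact hf.add_mul_le_exp_u hp hp1.le t ht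

lemma equilibrium_sub_le (hp : 1 / 2 ≤ p) (hp1 : p < 1) {j : ι} (hj₀ : 0 ≤ v j 0)
    (hj : v j 0 < equilibrium p) :
    ∀ t ∈ Ici (0 : ℝ),
      equilibrium p - v j t ≤ h p (v j 0) * exp (u 0) / (2 * (1 - p)) / exp (u t) := by
  intro t ht
  have hvt : 0 ≤ v j t :=
    hj₀.trans ((hf.strictMonoOn hp hp1 hj).monotoneOn Set.self_mem_Ici ht ht)
  have hbound :=
    mul_sub_le_h (by linarith) hp1 hvt (hf.lt_equilibrium (by linarith) hp1 hj t ht).le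
  rw [div_div, le_div_iff₀ (by have := sub_pos.2 hp1; positivity), ← hf.h_mul_exp_eq j t ht]
  calc (equilibrium p - v j t) * (2 * (1 - p) * exp (u t))
      = 2 * (1 - p) * (equilibrium p - v j t) * exp (u t) := by ring
    _ ≤ h p (v j t) * exp (u t) := by gcongr

lemma tendsto_equilibrium (hp : 1 / 2 ≤ p) (hp1 : p < 1) {j : ι} (hj₀ : 0 ≤ v j 0)
    (hj : v j 0 < equilibrium p) : Tendsto (v j) atTop (𝓝 (equilibrium p)) := by
  have hgap : Tendsto (fun t ↦ equilibrium p - v j t) atTop (𝓝 0) := by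
    refine squeeze_zero' ?_
      ((eventually_ge_atTop 0).mono fun t ht ↦ hf.equilibrium_sub_le hp hp1 hj₀ hj t ht)
      (tendsto_const_nhds.div_atTop (hf.tendsto_exp_u_atTop hp hp1))
    filter_upwards [eventually_ge_atTop 0] with t ht
    exact sub_nonneg.2 (hf.lt_equilibrium (by linarith) hp1 hj t ht).le
  simpa using (tendsto_const_nhds (x := equilibrium p)).sub hgap

end IsGradientFlow

end SpuriousFlow

end

theorem stmt_12_general
    (D : ℕ) (p : ℝ) (hp : 1 / 2 < p) (hp1 : p < 1)
    (u : ℝ → ℝ) (v : Fin D → ℝ → ℝ)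
    -- gradient-flow system on `[0, ∞)`
    (hu : ∀ t ∈ Set.Ici (0 : ℝ),
      HasDerivWithinAt u
        (Real.exp (-u t) * ∏ i, (p * Real.exp (-v i t) + (1 - p) * Real.exp (v i t)))
        (Set.Ici 0) t)
    (hv : ∀ (j : Fin D), ∀ t ∈ Set.Ici (0 : ℝ),
      HasDerivWithinAt (v j)
        (Real.exp (-u t) * (p * Real.exp (-v j t) - (1 - p) * Real.exp (v j t)) *
          ∏ i ∈ Finset.univ.erase j,
            (p * Real.exp (-v i t) + (1 - p) * Real.exp (v i t)))
        (Set.Ici 0) t)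
    (hv0 : ∀ j, 0 < v j 0 ∧ v j 0 < (1 / 2) * Real.log (p / (1 - p))) :
    ∀ j, StrictMonoOn (v j) (Set.Ici 0) ∧
      (∀ t ∈ Set.Ici (0 : ℝ), v j t < (1 / 2) * Real.log (p / (1 - p))) ∧
      Filter.Tendsto (v j) Filter.atTop (nhds ((1 / 2) * Real.log (p / (1 - p)))) := by
  have hflow : SpuriousFlow.IsGradientFlow p u v := ⟨hu, hv⟩
  intro j
  obtain ⟨hj₀, hj⟩ := hv0 j
  exact ⟨hflow.strictMonoOn hp.le hp1 hj, hflow.lt_equilibrium (by linarith) hp1 hj,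
    hflow.tendsto_equilibrium hp.le hp1 hj₀.le hj⟩

/-- **Proposition 1, monotone convergence of the spurious weights.** -/
theorem stmt_12
    (D : ℕ) (hD : 0 < D) (p : ℝ) (hp : 1 / 2 < p) (hp1 : p < 1)
    (u : ℝ → ℝ) (v : Fin D → ℝ → ℝ)
    -- gradient-flow system on `[0, ∞)`
    (hu : ∀ t ∈ Set.Ici (0 : ℝ),
      HasDerivWithinAt u
        (Real.exp (-u t) * ∏ i, (p * Real.exp (-v i t) + (1 - p) * Real.exp (v i t)))
        (Set.Ici 0) t)
    (hv : ∀ (j : Fin D), ∀ t ∈ Set.Ici (0 : ℝ),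
      HasDerivWithinAt (v j)
        (Real.exp (-u t) * (p * Real.exp (-v j t) - (1 - p) * Real.exp (v j t)) *
          ∏ i ∈ Finset.univ.erase j,
            (p * Real.exp (-v i t) + (1 - p) * Real.exp (v i t)))
        (Set.Ici 0) t)
    (hv0 : ∀ j, 0 < v j 0 ∧ v j 0 < (1 / 2) * Real.log (p / (1 - p))) :
    ∀ j, StrictMonoOn (v j) (Set.Ici 0) ∧
      (∀ t ∈ Set.Ici (0 : ℝ), v j t < (1 / 2) * Real.log (p / (1 - p))) ∧
      Filter.Tendsto (v j) Filter.atTop (nhds ((1 / 2) * Real.log (p / (1 - p)))) :=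
  stmt_12_general D p hp hp1 u v hu hv hv0
end

section
/- (Proposition 1, strong-bias limit of the weight ratio) Fix initial values u_0 > 0 and v_{0,1}, …, v_{0,D} > 0, and fix 0 < t < T. For each p ∈ (1/2, 1) with v_{0,j} < (1/2)·log(p/(1-p)) for all j, let (u^p, v_1^p, …, v_D^p) be a solution of the gradient-flow system with u^p(0) = u_0 and v_j^p(0) = v_{0,j}. Then liminf_{p → 1⁻} v_1^p(t)/u^p(t) ≥ v_{0,1} / log( e^{u_0} + t · exp( -Σ_{j=1}^D v_{0,j} ) ); in particular this lower bound is positive. -/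
/-!
Along the flow `e^u h_p(v_j)` is conserved (as `h_p' = -g_p`), so each `v_j` stays below the
equilibrium `½ log (p/(1-p))` where `h_p` vanishes; hence `u` and every `v_j` increase, and since
`g_p` decreases below the equilibrium, `(e^u)' = ∏ g_p(v_i) ≤ ∏ g_p(v_{0,i})`. This gives
`v_1(t)/u(t) ≥ v_{0,1} / log (e^{u_0} + t ∏ g_p(v_{0,i}))`, and the right side tends to the
claimed bound as `p → 1`, since `g_1(v) = e^{-v}`. Because `v_j' ≤ u'`, the ratio stays bounded
above, so the `liminf` is a genuine one.
-/

open Set Filter Real Topology Finset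

namespace GradientFlow

-- The paper's `g_p` and `h_p`.
noncomputable def flowG (p v : ℝ) : ℝ := p * exp (-v) + (1 - p) * exp v

noncomputable def flowH (p v : ℝ) : ℝ := p * exp (-v) - (1 - p) * exp v

variable {p : ℝ}

lemma flowG_nonneg (hp₀ : 0 ≤ p) (hp₁ : p ≤ 1) (v : ℝ) : 0 ≤ flowG p v :=
  add_nonneg (mul_nonneg hp₀ (exp_pos _).le) (mul_nonneg (sub_nonneg.2 hp₁) (exp_pos _).le)

lemma flowH_le_flowG (hp₁ : p ≤ 1) (v : ℝ) : flowH p v ≤ flowG p v := by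
  unfold flowH flowG
  nlinarith [exp_pos v]

lemma hasDerivAt_flowH (p v : ℝ) : HasDerivAt (flowH p) (-flowG p v) v := by
  refine ((((hasDerivAt_neg v).exp).const_mul p).sub
    ((hasDerivAt_exp v).const_mul (1 - p))).congr_deriv ?_
  rw [flowG]
  ring

lemma flowH_eq (p v : ℝ) : flowH p v = exp (-v) * (p - (1 - p) * exp (2 * v)) := by
  rw [flowH, show exp v = exp (-v) * exp (2 * v) by rw [← exp_add]; ring_nf]
  ring

lemma flowH_pos_of_lt_half_log (hp₀ : 0 < p) (hp₁ : p < 1) {v : ℝ}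
    (hv : v < 1 / 2 * log (p / (1 - p))) : 0 < flowH p v := by
  have hq : 0 < 1 - p := by linarith
  have h2v : exp (2 * v) < p / (1 - p) := by
    rw [← exp_log (div_pos hp₀ hq)]
    exact exp_lt_exp.2 (by linarith)
  rw [lt_div_iff₀ hq] at h2v
  rw [flowH_eq]
  exact mul_pos (exp_pos _) (by linarith)

lemma flowG_le_flowG_of_le (hp₁ : p ≤ 1) {a b : ℝ} (hab : a ≤ b) (hb : 0 ≤ flowH p b) :
    flowG p b ≤ flowG p a := by
  rw [flowH_eq, mul_nonneg_iff_of_pos_left (exp_pos _), two_mul, exp_add] at hb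
  have hx := exp_pos a
  have hxy : exp a ≤ exp b := exp_le_exp.2 hab
  have hxy' : (1 - p) * (exp a * exp b) ≤ (1 - p) * (exp b * exp b) :=
    mul_le_mul_of_nonneg_left (mul_le_mul_of_nonneg_right hxy (exp_pos b).le) (by linarith)
  have key : flowG p a - flowG p b
      = (exp b - exp a) * (p - (1 - p) * (exp a * exp b)) / (exp a * exp b) := by
    simp only [flowG, exp_neg]
    field_simp
    ring
  have : 0 ≤ flowG p a - flowG p b := by
    rw [key]
    exact div_nonneg (mul_nonneg (by linarith) (by linarith)) (by positivity)
  linarith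

lemma tendsto_half_log_odds : Tendsto (fun p => 1 / 2 * log (p / (1 - p))) (𝓝[<] 1) atTop := by
  have hq : Tendsto (fun p : ℝ => 1 - p) (𝓝[<] 1) (𝓝[>] 0) :=
    tendsto_nhdsWithin_of_tendsto_nhds_of_eventually_within _
      (((continuous_const.sub continuous_id).tendsto' 1 0 (sub_self 1)).mono_left
        nhdsWithin_le_nhds)
      (eventually_nhdsWithin_of_forall fun p hp => mem_Ioi.2 (sub_pos.2 hp))
  have hodds : Tendsto (fun p : ℝ => p / (1 - p)) (𝓝[<] 1) atTop :=
    (Tendsto.pos_mul_atTop one_pos (tendsto_id.mono_left nhdsWithin_le_nhds)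
      (tendsto_inv_nhdsGT_zero.comp hq)).congr fun p => (div_eq_mul_inv _ _).symm
  exact (tendsto_log_atTop.comp hodds).const_mul_atTop (by norm_num)

lemma tendsto_prod_flowG {ι : Type*} [Fintype ι] (w : ι → ℝ) :
    Tendsto (fun p => ∏ i, flowG p (w i)) (𝓝 1) (𝓝 (exp (-∑ i, w i))) := by
  have hcont : Continuous fun p => ∏ i, flowG p (w i) := by
    unfold flowG
    fun_prop
  simpa [flowG, ← sum_neg_distrib, exp_sum] using hcont.tendsto 1

lemma monotoneOn_Ici_of_hasDerivWithinAt_nonneg {f f' : ℝ → ℝ} {a : ℝ}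
    (hf : ∀ s ∈ Ici a, HasDerivWithinAt f (f' s) (Ici a) s) (hf' : ∀ s ∈ Ici a, 0 ≤ f' s) :
    MonotoneOn f (Ici a) := by
  refine monotoneOn_of_hasDerivWithinAt_nonneg (f' := f') (convex_Ici a)
    (fun s hs => (hf s hs).continuousWithinAt) (fun s hs => ?_) (fun s hs => ?_)
  · rw [interior_Ici] at hs ⊢
    exact (hf s (Ioi_subset_Ici_self hs)).mono Ioi_subset_Ici_self
  · rw [interior_Ici] at hs
    exact hf' s (Ioi_subset_Ici_self hs)

variable {ι : Type*} [Fintype ι] [DecidableEq ι]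

structure IsSolution (p : ℝ) (u : ℝ → ℝ) (v : ι → ℝ → ℝ) : Prop where
  hasDerivWithinAt_u : ∀ s ∈ Ici (0 : ℝ),
    HasDerivWithinAt u (exp (-u s) * ∏ i, flowG p (v i s)) (Ici 0) s
  hasDerivWithinAt_v : ∀ j, ∀ s ∈ Ici (0 : ℝ),
    HasDerivWithinAt (v j)
      (exp (-u s) * flowH p (v j s) * ∏ i ∈ univ.erase j, flowG p (v i s)) (Ici 0) s

namespace IsSolution

variable {u : ℝ → ℝ} {v : ι → ℝ → ℝ}

lemma exp_mul_flowH_eq (hsol : IsSolution p u v) (j : ι) {s : ℝ} (hs : 0 ≤ s) :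
    exp (u s) * flowH p (v j s) = exp (u 0) * flowH p (v j 0) := by
  have hderiv : ∀ r ∈ Ici (0 : ℝ),
      HasDerivWithinAt (fun r => exp (u r) * flowH p (v j r)) 0 (Ici 0) r := by
    intro r hr
    have := ((hsol.hasDerivWithinAt_u r hr).exp).mul
      ((hasDerivAt_flowH p (v j r)).comp_hasDerivWithinAt r (hsol.hasDerivWithinAt_v j r hr))
    refine this.congr_deriv ?_
    rw [← mul_prod_erase univ (fun i => flowG p (v i r)) (mem_univ j), Function.comp_apply]
    ring
  exact constant_of_has_deriv_right_zero
    (fun r hr => (hderiv r hr.1).continuousWithinAt.mono Icc_subset_Ici_self)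
    (fun r hr => (hderiv r hr.1).mono (Ici_subset_Ici.2 hr.1)) s ⟨hs, le_rfl⟩

lemma flowH_pos (hsol : IsSolution p u v) {j : ι} (h₀ : 0 < flowH p (v j 0)) {s : ℝ}
    (hs : 0 ≤ s) : 0 < flowH p (v j s) :=
  pos_of_mul_pos_right ((hsol.exp_mul_flowH_eq j hs).symm ▸ mul_pos (exp_pos _) h₀)
    (exp_pos _).le

lemma monotoneOn_u (hsol : IsSolution p u v) (hp₀ : 0 ≤ p) (hp₁ : p ≤ 1) :
    MonotoneOn u (Ici 0) :=
  monotoneOn_Ici_of_hasDerivWithinAt_nonneg hsol.hasDerivWithinAt_u fun _ _ =>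
    mul_nonneg (exp_pos _).le (prod_nonneg fun _ _ => flowG_nonneg hp₀ hp₁ _)

lemma monotoneOn_v (hsol : IsSolution p u v) (hp₀ : 0 ≤ p) (hp₁ : p ≤ 1) {j : ι}
    (h₀ : 0 < flowH p (v j 0)) : MonotoneOn (v j) (Ici 0) :=
  monotoneOn_Ici_of_hasDerivWithinAt_nonneg (hsol.hasDerivWithinAt_v j) fun _ hs =>
    mul_nonneg (mul_nonneg (exp_pos _).le (hsol.flowH_pos h₀ hs).le)
      (prod_nonneg fun _ _ => flowG_nonneg hp₀ hp₁ _)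

lemma monotoneOn_u_sub_v (hsol : IsSolution p u v) (hp₀ : 0 ≤ p) (hp₁ : p ≤ 1) (j : ι) :
    MonotoneOn (fun s => u s - v j s) (Ici 0) := by
  refine monotoneOn_Ici_of_hasDerivWithinAt_nonneg
    (fun s hs => (hsol.hasDerivWithinAt_u s hs).sub (hsol.hasDerivWithinAt_v j s hs))
    fun s _ => ?_
  rw [← mul_prod_erase univ (fun i => flowG p (v i s)) (mem_univ j), ← mul_assoc,
    ← mul_sub_right_distrib, ← mul_sub]
  exact mul_nonneg (mul_nonneg (exp_pos _).le (sub_nonneg.2 (flowH_le_flowG hp₁ _)))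
    (prod_nonneg fun _ _ => flowG_nonneg hp₀ hp₁ _)

lemma exp_le_add_mul_prod (hsol : IsSolution p u v) (hp₀ : 0 ≤ p) (hp₁ : p ≤ 1)
    (h₀ : ∀ j, 0 < flowH p (v j 0)) {t : ℝ} (ht : 0 ≤ t) :
    exp (u t) ≤ exp (u 0) + t * ∏ i, flowG p (v i 0) := by
  set B := ∏ i, flowG p (v i 0)
  have hmono : MonotoneOn (fun s => exp (u 0) + s * B - exp (u s)) (Ici 0) := by
    refine monotoneOn_Ici_of_hasDerivWithinAt_nonneg
      (fun s hs => (((hasDerivWithinAt_id s _).mul_const B).const_add _).sub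
        (hsol.hasDerivWithinAt_u s hs).exp) fun s hs => ?_
    have hcancel : exp (u s) * (exp (-u s) * ∏ i, flowG p (v i s)) = ∏ i, flowG p (v i s) := by
      rw [← mul_assoc, ← exp_add, add_neg_cancel, exp_zero, one_mul]
    rw [one_mul, hcancel, sub_nonneg]
    exact prod_le_prod (fun i _ => flowG_nonneg hp₀ hp₁ _) fun i _ =>
      flowG_le_flowG_of_le hp₁ (hsol.monotoneOn_v hp₀ hp₁ (h₀ i) self_mem_Ici hs hs)
        (hsol.flowH_pos (h₀ i) hs).le
  simpa using hmono self_mem_Ici ht ht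

lemma div_log_le_div (hsol : IsSolution p u v) (hp₀ : 0 ≤ p) (hp₁ : p ≤ 1)
    (h₀ : ∀ j, 0 < flowH p (v j 0)) (hu₀ : 0 < u 0) {j : ι} (hv₀ : 0 ≤ v j 0) {t : ℝ}
    (ht : 0 ≤ t) : v j 0 / log (exp (u 0) + t * ∏ i, flowG p (v i 0)) ≤ v j t / u t := by
  have hut : 0 < u t := hu₀.trans_le (hsol.monotoneOn_u hp₀ hp₁ self_mem_Ici ht ht)
  have hvt : v j 0 ≤ v j t := hsol.monotoneOn_v hp₀ hp₁ (h₀ j) self_mem_Ici ht ht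
  have hB : 0 ≤ ∏ i, flowG p (v i 0) := prod_nonneg fun i _ => flowG_nonneg hp₀ hp₁ _
  have hlog : u t ≤ log (exp (u 0) + t * ∏ i, flowG p (v i 0)) :=
    (le_log_iff_exp_le (by positivity)).2 (hsol.exp_le_add_mul_prod hp₀ hp₁ h₀ ht)
  exact div_le_div₀ (hv₀.trans hvt) hvt hut hlog

lemma div_le_one_add_div (hsol : IsSolution p u v) (hp₀ : 0 ≤ p) (hp₁ : p ≤ 1)
    (hu₀ : 0 < u 0) {j : ι} (hv₀ : 0 ≤ v j 0) {t : ℝ} (ht : 0 ≤ t) :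
    v j t / u t ≤ 1 + v j 0 / u 0 := by
  have hut : u 0 ≤ u t := hsol.monotoneOn_u hp₀ hp₁ self_mem_Ici ht ht
  have hvt : u 0 - v j 0 ≤ u t - v j t := hsol.monotoneOn_u_sub_v hp₀ hp₁ j self_mem_Ici ht ht
  calc v j t / u t ≤ (u t + v j 0) / u t :=
        div_le_div_of_nonneg_right (by linarith) (hu₀.trans_le hut).le
    _ = 1 + v j 0 / u t := by rw [add_div, div_self (by linarith)]
    _ ≤ 1 + v j 0 / u 0 := by gcongr

end IsSolution

end GradientFlow

open GradientFlow

theorem stmt_17_general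
    (D : ℕ) (hD : 0 < D)
    (u0 : ℝ) (hu0 : 0 < u0) (v0 : Fin D → ℝ) (hv0 : ∀ j, 0 < v0 j)
    (t : ℝ) (ht : 0 < t)
    (U : ℝ → ℝ → ℝ) (V : ℝ → Fin D → ℝ → ℝ)
    (hsol : ∀ p : ℝ, 1 / 2 < p → p < 1 →
      (∀ j, v0 j < (1 / 2) * Real.log (p / (1 - p))) →
      U p 0 = u0 ∧ (∀ j, V p j 0 = v0 j) ∧
      (∀ s ∈ Set.Ici (0 : ℝ),
        HasDerivWithinAt (U p)
          (Real.exp (-U p s) *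
            ∏ i, (p * Real.exp (-V p i s) + (1 - p) * Real.exp (V p i s)))
          (Set.Ici 0) s) ∧
      (∀ (j : Fin D), ∀ s ∈ Set.Ici (0 : ℝ),
        HasDerivWithinAt (V p j)
          (Real.exp (-U p s) *
            (p * Real.exp (-V p j s) - (1 - p) * Real.exp (V p j s)) *
            ∏ i ∈ Finset.univ.erase j,
              (p * Real.exp (-V p i s) + (1 - p) * Real.exp (V p i s)))
          (Set.Ici 0) s)) :
    v0 ⟨0, hD⟩ / Real.log (Real.exp u0 + t * Real.exp (-∑ j, v0 j)) ≤
      Filter.liminf (fun p => V p ⟨0, hD⟩ t / U p t) (nhdsWithin 1 (Set.Iio 1)) ∧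
    0 < v0 ⟨0, hD⟩ / Real.log (Real.exp u0 + t * Real.exp (-∑ j, v0 j)) := by
  set j₀ : Fin D := ⟨0, hD⟩
  have hlog : 0 < log (exp u0 + t * exp (-∑ j, v0 j)) :=
    log_pos (by nlinarith [one_lt_exp_iff.2 hu0, exp_pos (-∑ j, v0 j)])
  refine ⟨?_, div_pos (hv0 j₀) hlog⟩
  have hbounds : ∀ᶠ p in 𝓝[<] 1,
      v0 j₀ / log (exp u0 + t * ∏ i, flowG p (v0 i)) ≤ V p j₀ t / U p t ∧
        V p j₀ t / U p t ≤ 1 + v0 j₀ / u0 := by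
    filter_upwards [Ioo_mem_nhdsLT (by norm_num : (1 / 2 : ℝ) < 1),
      eventually_all.2 fun j => tendsto_half_log_odds.eventually_gt_atTop (v0 j)]
      with p ⟨hp_half, hp_one⟩ hadm
    obtain ⟨hU0, hV0, hU, hV⟩ := hsol p hp_half hp_one hadm
    have hflow : IsSolution p (U p) (V p) := ⟨hU, hV⟩
    have hp₀ : 0 ≤ p := by linarith
    have h₀ : ∀ j, 0 < flowH p (V p j 0) := fun j =>
      flowH_pos_of_lt_half_log (by linarith) hp_one (hV0 j ▸ hadm j)
    have hlower := hflow.div_log_le_div hp₀ hp_one.le h₀ (hU0 ▸ hu0) (hV0 j₀ ▸ (hv0 j₀).le) ht.le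
    have hupper := hflow.div_le_one_add_div hp₀ hp_one.le (hU0 ▸ hu0) (hV0 j₀ ▸ (hv0 j₀).le) ht.le
    simp only [hU0, hV0] at hlower hupper
    exact ⟨hlower, hupper⟩
  have hlim : Tendsto (fun p => v0 j₀ / log (exp u0 + t * ∏ i, flowG p (v0 i))) (𝓝[<] 1)
      (𝓝 (v0 j₀ / log (exp u0 + t * exp (-∑ j, v0 j)))) := by
    have hprod := (tendsto_prod_flowG v0).mono_left (nhdsWithin_le_nhds (s := Iio 1))
    exact tendsto_const_nhds.div ((hprod.const_mul t).const_add _ |>.log (by positivity)) hlog.ne'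
  rw [← hlim.liminf_eq]
  exact liminf_le_liminf (hbounds.mono fun p hp => hp.1) hlim.isBoundedUnder_ge
    (isCoboundedUnder_ge_of_eventually_le _ (hbounds.mono fun p hp => hp.2))

/-- **Proposition 1, strong-bias limit of the weight ratio.** For each
`p ∈ (1/2, 1)` with admissible initial data, `(U p, V p ·)` solves the gradient-flow
system with parameter `p` and initial values `(u₀, v₀)`. Then the liminf as `p → 1⁻`
of the weight ratio at time `t` is at least
`v₀ 1 / log(e^{u₀} + t·exp(-Σ_j v₀ j))`, which is positive. -/
theorem stmt_17
    (D : ℕ) (hD : 0 < D)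
    (u0 : ℝ) (hu0 : 0 < u0) (v0 : Fin D → ℝ) (hv0 : ∀ j, 0 < v0 j)
    (t T : ℝ) (ht : 0 < t) (htT : t < T)
    (U : ℝ → ℝ → ℝ) (V : ℝ → Fin D → ℝ → ℝ)
    (hsol : ∀ p : ℝ, 1 / 2 < p → p < 1 →
      (∀ j, v0 j < (1 / 2) * Real.log (p / (1 - p))) →
      U p 0 = u0 ∧ (∀ j, V p j 0 = v0 j) ∧
      (∀ s ∈ Set.Ici (0 : ℝ),
        HasDerivWithinAt (U p)
          (Real.exp (-U p s) *
            ∏ i, (p * Real.exp (-V p i s) + (1 - p) * Real.exp (V p i s)))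
          (Set.Ici 0) s) ∧
      (∀ (j : Fin D), ∀ s ∈ Set.Ici (0 : ℝ),
        HasDerivWithinAt (V p j)
          (Real.exp (-U p s) *
            (p * Real.exp (-V p j s) - (1 - p) * Real.exp (V p j s)) *
            ∏ i ∈ Finset.univ.erase j,
              (p * Real.exp (-V p i s) + (1 - p) * Real.exp (V p i s)))
          (Set.Ici 0) s)) :
    v0 ⟨0, hD⟩ / Real.log (Real.exp u0 + t * Real.exp (-∑ j, v0 j)) ≤
      Filter.liminf (fun p => V p ⟨0, hD⟩ t / U p t) (nhdsWithin 1 (Set.Iio 1)) ∧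
    0 < v0 ⟨0, hD⟩ / Real.log (Real.exp u0 + t * Real.exp (-∑ j, v0 j)) :=
  stmt_17_general D hD u0 hu0 v0 hv0 t ht U V hsol
end

section
/- (Lemma 1, cross-environment alignment) Let X^b and X^d be independent, where X^b has spurious-feature parameter p^b and X^d has parameter p^d = 1/2, both with the same class label y. Then the expected cosine similarity of their embeddings satisfies E[ ⟨W·X^b, W·X^d⟩ / (‖W·X^b‖·‖W·X^d‖) ] = 1/(D+1). -/
/-!
Since `Wᵀ W = 1`, the map `W` preserves dot products, and every value of `Xb` or `Xd` has
squared norm `D + 1`; so the cosine similarity is `⟨Xb, Xd⟩ / (D + 1)`, whose numerator is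
`y² + Σᵢ Xbᵢ Xdᵢ = 1 + Σᵢ Xbᵢ Xdᵢ`. Each spurious coordinate of `Xd` is a sign `±y` of mean
zero, independent of `Xb`, so the cross terms average out and the expectation is `1 / (D + 1)`.
-/

open MeasureTheory Finset Function Matrix

theorem Matrix.dotProduct_mulVec_mulVec_of_transpose_mul_self_eq_one {m n R : Type*}
    [Fintype m] [Fintype n] [DecidableEq n] [CommSemiring R] {W : Matrix m n R}
    (hW : Wᵀ * W = 1) (x x' : n → R) : W *ᵥ x ⬝ᵥ W *ᵥ x' = x ⬝ᵥ x' := by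
  rw [dotProduct_mulVec, ← vecMul_transpose, vecMul_vecMul, hW, vecMul_one]

theorem Matrix.cosine_mulVec_of_transpose_mul_self_eq_one {m n : Type*} [Fintype m] [Fintype n]
    [DecidableEq n] {W : Matrix m n ℝ} (hW : Wᵀ * W = 1) (x x' : n → ℝ) :
    (W *ᵥ x ⬝ᵥ W *ᵥ x') / (√(∑ q, (W *ᵥ x) q ^ 2) * √(∑ q, (W *ᵥ x') q ^ 2)) =
      (x ⬝ᵥ x') / (√(x ⬝ᵥ x) * √(x' ⬝ᵥ x')) := by
  simp only [sq, ← dotProduct.eq_1, dotProduct_mulVec_mulVec_of_transpose_mul_self_eq_one hW]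

theorem dotProduct_self_eq_card_of_mul_self_eq_one {n R : Type*} [Fintype n] [Semiring R]
    {x : n → R} (hx : ∀ i, x i * x i = 1) : x ⬝ᵥ x = Fintype.card n := by
  simp [dotProduct, hx]

theorem Fintype.sum_pi_apply_eq_zero {ι β M : Type*} [Fintype ι] [DecidableEq ι] [Fintype β]
    [AddCommMonoid M] {g : β → M} (hg : ∑ b, g b = 0) (i : ι) :
    ∑ δ : ι → β, g (δ i) = 0 := by
  rw [← (Equiv.funSplitAt i β).symm.sum_comp, Fintype.sum_prod_type_right]
  simp [hg]

theorem sum_prod_ite_eq_one {ι R : Type*} [Fintype ι] [DecidableEq ι] [CommRing R] (p : R) :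
    ∑ ε : ι → Bool, ∏ i, (if ε i then p else 1 - p) = 1 := by
  rw [← Fintype.prod_sum (fun (_ : ι) (b : Bool) => if b then p else 1 - p)]
  simp

theorem sum_half_pow_eq_one (D : ℕ) : ∑ _δ : Fin D → Bool, (1 / 2 : ℝ) ^ D = 1 := by
  simp

theorem integral_eq_sum_of_eqOn {Ω ι : Type*} [MeasurableSpace Ω] {μ : Measure Ω}
    [IsFiniteMeasure μ] [Fintype ι] {A : ι → Set Ω} (hA : ∀ i, MeasurableSet (A i))
    (hdisj : Pairwise (Disjoint on A)) (hμA : ∑ i, μ (A i) = μ Set.univ) {f : Ω → ℝ}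
    {c : ι → ℝ} (hf : ∀ i, Set.EqOn f (fun _ => c i) (A i)) :
    ∫ ω, f ω ∂μ = ∑ i, μ.real (A i) * c i := by
  have hfull : ∀ᵐ ω ∂μ, ω ∈ ⋃ i, A i := by
    rw [ae_mem_iff_measure_eq (MeasurableSet.iUnion hA).nullMeasurableSet,
      measure_iUnion hdisj hA, tsum_fintype, hμA]
  have hint : ∀ i, IntegrableOn f (A i) μ := fun i =>
    (integrableOn_const (measure_ne_top μ _)).congr_fun (hf i).symm (hA i)
  rw [integral_eq_setIntegral hfull, integral_iUnion_fintype hA hdisj hint]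
  refine sum_congr rfl fun i _ => ?_
  rw [setIntegral_congr_fun (hA i) (hf i), setIntegral_const, smul_eq_mul]

theorem integral_eq_sum_of_measure_eq {Ω α κ : Type*} [MeasurableSpace Ω] [MeasurableSpace α]
    [MeasurableSingletonClass α] {μ : Measure Ω} [IsProbabilityMeasure μ] [Fintype κ]
    {X Y : Ω → α} (hX : Measurable X) (hY : Measurable Y) {v : κ → α} (hv : Injective v)
    {w : κ → κ → ℝ} (hw : ∀ ε δ, 0 ≤ w ε δ) (hw_sum : ∑ ε, ∑ δ, w ε δ = 1)
    (hlaw : ∀ ε δ, μ {ω | X ω = v ε ∧ Y ω = v δ} = ENNReal.ofReal (w ε δ)) (F : α → α → ℝ) :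
    ∫ ω, F (X ω) (Y ω) ∂μ = ∑ ε, ∑ δ, w ε δ * F (v ε) (v δ) := by
  let A (p : κ × κ) : Set Ω := {ω | X ω = v p.1 ∧ Y ω = v p.2}
  have hA (p) : MeasurableSet (A p) :=
    (hX (measurableSet_singleton _)).inter (hY (measurableSet_singleton _))
  have hdisj : Pairwise (Disjoint on A) := fun p q hpq =>
    Set.disjoint_left.mpr fun _ ⟨hx, hy⟩ ⟨hx', hy'⟩ =>
      hpq (Prod.ext (hv (hx.symm.trans hx')) (hv (hy.symm.trans hy')))
  have hμA (p : κ × κ) : μ (A p) = ENNReal.ofReal (w p.1 p.2) := hlaw p.1 p.2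
  have htotal : ∑ p, μ (A p) = μ Set.univ := by
    rw [Fintype.sum_congr _ _ hμA, ← ENNReal.ofReal_sum_of_nonneg fun p _ => hw p.1 p.2,
      Fintype.sum_prod_type, hw_sum, ENNReal.ofReal_one, measure_univ]
  rw [integral_eq_sum_of_eqOn hA hdisj htotal (c := fun p => F (v p.1) (v p.2))
    fun p ω ⟨hx, hy⟩ => by simp only [hx, hy], Fintype.sum_prod_type]
  simp only [measureReal_def, hμA, ENNReal.toReal_ofReal (hw _ _)]

/-- The value of `X` (with label `y`) whose spurious coordinates equal `y` exactly where `ε`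
is `true`. -/
def signVec {D : ℕ} (y : ℝ) (ε : Fin D → Bool) : Fin (D + 1) → ℝ :=
  Fin.cons y fun i => if ε i then y else -y

section signVec

variable {D : ℕ} {y : ℝ}

theorem signVec_injective (hy : y ≠ 0) : Injective (signVec (D := D) y) := by
  intro ε ε' h
  funext i
  have hi : (if ε i then y else -y) = if ε' i then y else -y := by
    simpa [signVec] using congrFun h i.succ
  revert hi
  cases ε i <;> cases ε' i <;> grind

theorem signVec_dotProduct_self (hy : y * y = 1) (ε : Fin D → Bool) :
    signVec y ε ⬝ᵥ signVec y ε = D + 1 := by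
  rw [dotProduct_self_eq_card_of_mul_self_eq_one, Fintype.card_fin, Nat.cast_succ]
  intro i
  cases i using Fin.cases with
  | zero => simpa [signVec] using hy
  | succ i => simp only [signVec, Fin.cons_succ]; split <;> simpa using hy

theorem sum_uniform_mul_signVec_dotProduct (hy : y * y = 1) (ε : Fin D → Bool) :
    ∑ δ : Fin D → Bool, (1 / 2 : ℝ) ^ D * (signVec y ε ⬝ᵥ signVec y δ) = 1 := by
  have hcentered : ∀ i, ∑ δ : Fin D → Bool, (if δ i then y else -y) = 0 :=
    Fintype.sum_pi_apply_eq_zero (g := fun b : Bool => if b then y else -y) (by simp)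
  rw [← mul_sum]
  simp only [dotProduct, Fin.sum_univ_succ, signVec, Fin.cons_zero, Fin.cons_succ,
    sum_add_distrib]
  rw [sum_comm]
  simp only [← mul_sum, hcentered, mul_zero, sum_const_zero, add_zero, hy]
  rw [mul_sum, mul_one]
  exact sum_half_pow_eq_one D

theorem cosine_mulVec_signVec {m : Type*} [Fintype m] {W : Matrix m (Fin (D + 1)) ℝ}
    (hW : Wᵀ * W = 1) (hy : y * y = 1) (ε δ : Fin D → Bool) :
    (W *ᵥ signVec y ε ⬝ᵥ W *ᵥ signVec y δ) /
        (√(∑ q, (W *ᵥ signVec y ε) q ^ 2) * √(∑ q, (W *ᵥ signVec y δ) q ^ 2)) =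
      (signVec y ε ⬝ᵥ signVec y δ) / (D + 1) := by
  rw [cosine_mulVec_of_transpose_mul_self_eq_one hW, signVec_dotProduct_self hy,
    signVec_dotProduct_self hy, Real.mul_self_sqrt (by positivity)]

end signVec

theorem stmt_18_general
    {Ω : Type*} [MeasurableSpace Ω] (μ : MeasureTheory.Measure Ω)
    [MeasureTheory.IsProbabilityMeasure μ]
    (D Q : ℕ)
    (pb : ℝ) (hpb : 1 / 2 ≤ pb) (hpb1 : pb ≤ 1)
    (y : ℝ) (hy : y = 1 ∨ y = -1)
    -- `W` is semi-orthogonal: `Wᵀ W = I`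
    (W : Matrix (Fin Q) (Fin (D + 1)) ℝ) (hW : W.transpose * W = 1)
    (Xb Xd : Ω → (Fin (D + 1) → ℝ))
    (hXb : Measurable Xb) (hXd : Measurable Xd)
    -- joint law: `Xb` and `Xd` independent; spurious coordinates of `Xb` i.i.d. equal
    -- to `y` with probability `pb`; those of `Xd` i.i.d. equal to `y` with probability `1/2`.
    (hlaw : ∀ (ε δ : Fin D → Bool),
      μ {ω | Xb ω = Fin.cons y (fun i => if ε i then y else -y) ∧
             Xd ω = Fin.cons y (fun i => if δ i then y else -y)} =
        ENNReal.ofReal ((∏ i, (if ε i then pb else 1 - pb)) * (1 / 2) ^ D)) :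
    ∫ ω, (dotProduct (W.mulVec (Xb ω)) (W.mulVec (Xd ω))) /
        (Real.sqrt (∑ q, (W.mulVec (Xb ω)) q ^ 2) *
         Real.sqrt (∑ q, (W.mulVec (Xd ω)) q ^ 2)) ∂μ
      = 1 / ((D : ℝ) + 1) := by
  have hy2 : y * y = 1 := by rcases hy with rfl | rfl <;> norm_num
  rw [integral_eq_sum_of_measure_eq hXb hXd (signVec_injective (by grind))
    (w := fun ε _ => (∏ i, (if ε i then pb else 1 - pb)) * (1 / 2) ^ D)
    (fun ε _ => mul_nonneg (prod_nonneg fun i _ => by split <;> linarith) (by positivity))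
    (by simp only [← mul_sum, sum_half_pow_eq_one, mul_one, sum_prod_ite_eq_one]) hlaw
    (fun x x' => (W *ᵥ x ⬝ᵥ W *ᵥ x') / (√(∑ q, (W *ᵥ x) q ^ 2) * √(∑ q, (W *ᵥ x') q ^ 2)))]
  simp only [cosine_mulVec_signVec hW hy2]
  calc _ = ∑ ε, (∏ i, (if ε i then pb else 1 - pb)) / (D + 1) *
          ∑ δ : Fin D → Bool, (1 / 2 : ℝ) ^ D * (signVec y ε ⬝ᵥ signVec y δ) := by
        simp only [mul_sum]
        refine sum_congr rfl fun ε _ => sum_congr rfl fun δ _ => ?_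
        ring
    _ = 1 / (D + 1) := by
        simp only [sum_uniform_mul_signVec_dotProduct hy2, mul_one, ← sum_div, sum_prod_ite_eq_one]

/-- **Lemma 1, cross-environment alignment.** `Xb` (parameter `p^b`)
and `Xd` (parameter `p^d = 1/2`) are independent random `{-1,1}`-vectors with the same
label `y`: the first coordinate is `y` and the remaining `D` coordinates are i.i.d.,
equal to `y` with the given probability. Then the expected cosine similarity of the
embeddings `W·Xb` and `W·Xd` equals `1/(D+1)`. -/
theorem stmt_18
    {Ω : Type*} [MeasurableSpace Ω] (μ : MeasureTheory.Measure Ω)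
    [MeasureTheory.IsProbabilityMeasure μ]
    (D Q : ℕ) (hD : 0 < D) (hQ : D + 1 ≤ Q)
    (pb : ℝ) (hpb : 1 / 2 ≤ pb) (hpb1 : pb ≤ 1)
    (y : ℝ) (hy : y = 1 ∨ y = -1)
    -- `W` is semi-orthogonal: `Wᵀ W = I`
    (W : Matrix (Fin Q) (Fin (D + 1)) ℝ) (hW : W.transpose * W = 1)
    (Xb Xd : Ω → (Fin (D + 1) → ℝ))
    (hXb : Measurable Xb) (hXd : Measurable Xd)
    -- joint law: `Xb` and `Xd` independent; spurious coordinates of `Xb` i.i.d. equal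
    -- to `y` with probability `pb`; those of `Xd` i.i.d. equal to `y` with probability `1/2`.
    (hlaw : ∀ (ε δ : Fin D → Bool),
      μ {ω | Xb ω = Fin.cons y (fun i => if ε i then y else -y) ∧
             Xd ω = Fin.cons y (fun i => if δ i then y else -y)} =
        ENNReal.ofReal ((∏ i, (if ε i then pb else 1 - pb)) * (1 / 2) ^ D)) :
    ∫ ω, (dotProduct (W.mulVec (Xb ω)) (W.mulVec (Xd ω))) /
        (Real.sqrt (∑ q, (W.mulVec (Xb ω)) q ^ 2) *
         Real.sqrt (∑ q, (W.mulVec (Xd ω)) q ^ 2)) ∂μ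
      = 1 / ((D : ℝ) + 1) :=
  stmt_18_general μ D Q pb hpb hpb1 y hy W hW Xb Xd hXb hXd hlaw
end
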